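/- A rooted binary phylogenetic network R on X is tree-child if and only if there exists a complete tree-child cherry-picking sequence for R. -/

import Mathlib

/-!  Formalisation preliminaries for rooted and unrooted binary phylogenetic
networks, cherry reductions, cherry-reduction sequences and cherry-picking
sequences, following Döcker & Linz. -/

/-- A finite directed graph whose vertices are natural numbers. -/
structure DNet where
  verts : Finset ℕ
  arcs : Finset (ℕ × ℕ)

namespace DNet

/-- in-degree of a vertex -/
def inDeg (N : DNet) (v : ℕ) : ℕ := (N.arcs.filter (fun p => p.2 = v)).card

/-- out-degree of a vertex -/
def outDeg (N : DNet) (v : ℕ) : ℕ := (N.arcs.filter (fun p => p.1 = v)).card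

/-- the arc relation -/
def Arc (N : DNet) (u v : ℕ) : Prop := (u, v) ∈ N.arcs

/-- the digraph has no directed cycle -/
def Acyclic (N : DNet) : Prop := ∀ v, ¬ Relation.TransGen N.Arc v v

/-- root: in-degree 0 and out-degree 2 -/
def IsRoot (N : DNet) (v : ℕ) : Prop := v ∈ N.verts ∧ N.inDeg v = 0 ∧ N.outDeg v = 2

/-- leaf: in-degree 1 and out-degree 0 -/
def IsLeaf (N : DNet) (v : ℕ) : Prop := v ∈ N.verts ∧ N.inDeg v = 1 ∧ N.outDeg v = 0

/-- tree vertex: in-degree 1 and out-degree 2 -/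
def IsTreeVertex (N : DNet) (v : ℕ) : Prop := v ∈ N.verts ∧ N.inDeg v = 1 ∧ N.outDeg v = 2

/-- reticulation: in-degree 2 and out-degree 1 -/
def IsRet (N : DNet) (v : ℕ) : Prop := v ∈ N.verts ∧ N.inDeg v = 2 ∧ N.outDeg v = 1

/-- the network consists of a single vertex -/
def SingleVertex (N : DNet) : Prop := N.verts.card = 1 ∧ N.arcs = ∅

/-- the reticulation number of a rooted network: number of in-degree-2 vertices -/
def retNum (N : DNet) : ℕ := (N.verts.filter (fun v => N.inDeg v = 2)).card

/-- tree-child: every vertex with a child has a child that is a tree vertex or a leaf -/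
def TreeChild (N : DNet) : Prop :=
  ∀ v ∈ N.verts, N.outDeg v ≠ 0 → ∃ c, (v, c) ∈ N.arcs ∧ (N.IsTreeVertex c ∨ N.IsLeaf c)

/-- a stack: two reticulations joined by an arc -/
def HasStack (N : DNet) : Prop := ∃ u v, N.IsRet u ∧ N.IsRet v ∧ (u, v) ∈ N.arcs

/-- a pair of sibling reticulations: two reticulations with a common parent -/
def HasSiblingRets (N : DNet) : Prop :=
  ∃ p u v, u ≠ v ∧ N.IsRet u ∧ N.IsRet v ∧ (p, u) ∈ N.arcs ∧ (p, v) ∈ N.arcs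

/-- stack-free -/
def StackFree (N : DNet) : Prop := ¬ N.HasStack

end DNet

/-- `N` is a rooted binary phylogenetic network with leaf set `X`
(including the degenerate single-vertex network when `|X| = 1`). -/
def IsRootedBinaryNet (N : DNet) (X : Finset ℕ) : Prop :=
  (∃ x, X = {x} ∧ N.verts = {x} ∧ N.arcs = ∅) ∨
  ((∀ p ∈ N.arcs, p.1 ∈ N.verts ∧ p.2 ∈ N.verts) ∧
   (∀ p ∈ N.arcs, p.1 ≠ p.2) ∧
   N.Acyclic ∧
   (∃! ρ, ρ ∈ N.verts ∧ N.inDeg ρ = 0) ∧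
   (∀ v ∈ N.verts, N.IsRoot v ∨ N.IsLeaf v ∨ N.IsTreeVertex v ∨ N.IsRet v) ∧
   (∀ v, N.IsLeaf v ↔ v ∈ X))

/-- `[a,b]` is a cherry of the rooted network `N` (with `a` the leaf to be deleted). -/
def RCherry (N : DNet) (a b : ℕ) : Prop :=
  a ≠ b ∧ N.IsLeaf a ∧ N.IsLeaf b ∧ ∃ p, (p, a) ∈ N.arcs ∧ (p, b) ∈ N.arcs

/-- `(a,b)` is a reticulated cherry of the rooted network `N` with reticulation leaf `a`:
the parent of `a` is a reticulation and receives an arc from the parent of `b`. -/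
def RRetCherry (N : DNet) (a b : ℕ) : Prop :=
  a ≠ b ∧ N.IsLeaf a ∧ N.IsLeaf b ∧
  ∃ pa pb, (pa, a) ∈ N.arcs ∧ (pb, b) ∈ N.arcs ∧ N.IsRet pa ∧ (pb, pa) ∈ N.arcs

/-- `M` is obtained from the rooted network `N` by reducing the cherry `[a,b]`:
delete `a` and suppress (or, if it is the root, delete) the resulting degree-2 vertex. -/
def RReduceCherry (N M : DNet) (a b : ℕ) : Prop :=
  RCherry N a b ∧
  ∃ p, (p, a) ∈ N.arcs ∧ (p, b) ∈ N.arcs ∧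
    ((N.inDeg p = 0 ∧ M.verts = N.verts \ {a, p} ∧ M.arcs = N.arcs \ {(p, a), (p, b)}) ∨
     (∃ g, (g, p) ∈ N.arcs ∧ M.verts = N.verts \ {a, p} ∧
        M.arcs = insert (g, b) (N.arcs \ {(g, p), (p, a), (p, b)})))

/-- `M` is obtained from the rooted network `N` by reducing the reticulated cherry `(a,b)`
with reticulation leaf `a`: delete the reticulation arc `(p_b, p_a)` and suppress the two
resulting degree-2 vertices. -/
def RReduceRetCherry (N M : DNet) (a b : ℕ) : Prop :=
  RRetCherry N a b ∧
  ∃ pa pb qa qb, (pa, a) ∈ N.arcs ∧ (pb, b) ∈ N.arcs ∧ N.IsRet pa ∧ (pb, pa) ∈ N.arcs ∧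
    (qa, pa) ∈ N.arcs ∧ qa ≠ pb ∧ (qb, pb) ∈ N.arcs ∧
    M.verts = N.verts \ {pa, pb} ∧
    M.arcs = insert (qa, a) (insert (qb, b)
      (N.arcs \ {(pb, pa), (pa, a), (qa, pa), (pb, b), (qb, pb)}))

/-- A recorded reduction: either a cherry pair `[x,y]` or a reticulated-cherry pair `(x,y)`
(the deleted leaf, resp. the reticulation leaf, is listed first). -/
inductive Pick where
  | cherry (x y : ℕ)
  | ret (x y : ℕ)
deriving DecidableEq

namespace Pick

/-- first coordinate -/
def fst : Pick → ℕ
  | cherry x _ => x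
  | ret x _ => x

/-- second coordinate -/
def snd : Pick → ℕ
  | cherry _ y => y
  | ret _ y => y

/-- the pair contains the element `z` -/
def Contains (r : Pick) (z : ℕ) : Prop := r.fst = z ∨ r.snd = z

/-- the pair is a reticulated-cherry pair -/
def IsRetPair : Pick → Prop
  | cherry _ _ => False
  | ret _ _ => True

/-- the pair is a cherry pair -/
def IsCherryPair : Pick → Prop
  | cherry _ _ => True
  | ret _ _ => False

end Pick

/-- The step from `N` to `M` is the cherry reduction recorded by the pick `r`
(rooted version). -/
def RStep (N M : DNet) : Pick → Prop
  | .cherry x y => RReduceCherry N M x y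
  | .ret x y => RReduceRetCherry N M x y

/-- `(Ns 0, …, Ns k)` is a cherry-reduction sequence of rooted networks whose associated
cherry-picking sequence is `(rs 0, …, rs (k-1))`. -/
def RCherrySeq (Ns : ℕ → DNet) (rs : ℕ → Pick) (k : ℕ) : Prop :=
  ∀ i < k, RStep (Ns i) (Ns (i + 1)) (rs i)

/-- `(Ns 0, …, Ns k)` is a cherry-reduction sequence of rooted networks. -/
def RReductionSeq (Ns : ℕ → DNet) (k : ℕ) : Prop :=
  ∀ i < k, ∃ r, RStep (Ns i) (Ns (i + 1)) r

/-- `R` is a rooted orchard network: it admits a complete cherry-reduction sequence. -/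
def Orchard (R : DNet) : Prop :=
  ∃ Ns k, Ns 0 = R ∧ RReductionSeq Ns k ∧ (Ns k).SingleVertex

/-- `j = s(i)`: the smallest index `j > i` (within the sequence of length `k`) such that
`rs j` contains the first coordinate of `rs i`. -/
def SuccAt (rs : ℕ → Pick) (k i j : ℕ) : Prop :=
  i < j ∧ j < k ∧ (rs j).Contains (rs i).fst ∧
  ∀ l, i < l → l < j → ¬ (rs l).Contains (rs i).fst

/-- Property (P1): the successor pair of every reticulated-cherry pair, if it exists,
is a cherry pair. -/
def SeqP1 (rs : ℕ → Pick) (k : ℕ) : Prop :=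
  ∀ i j, (rs i).IsRetPair → SuccAt rs k i j → (rs j).IsCherryPair

/-- Property (P2): no element of the sequence is the successor pair of two distinct
reticulated-cherry pairs. -/
def SeqP2 (rs : ℕ → Pick) (k : ℕ) : Prop :=
  ∀ i i' j, i ≠ i' → (rs i).IsRetPair → (rs i').IsRetPair →
    SuccAt rs k i j → SuccAt rs k i' j → False

/-- A tree-child cherry-picking sequence: one satisfying (P1) and (P2). -/
def TreeChildSeq (rs : ℕ → Pick) (k : ℕ) : Prop := SeqP1 rs k ∧ SeqP2 rs k

/-- Property (P3): the first coordinate of each pair does not occur as the second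
coordinate of any later pair. -/
def SeqP3 (rs : ℕ → Pick) (k : ℕ) : Prop :=
  ∀ i j, i < j → j < k → (rs i).fst ≠ (rs j).snd

/-- A finite undirected graph whose vertices are natural numbers. -/
structure UNet where
  verts : Finset ℕ
  edges : Finset (Sym2 ℕ)

namespace UNet

/-- degree of a vertex -/
def deg (U : UNet) (v : ℕ) : ℕ := (U.edges.filter (fun e => v ∈ e)).card

/-- adjacency -/
def Adj (U : UNet) (u v : ℕ) : Prop := u ≠ v ∧ s(u, v) ∈ U.edges

/-- connectedness -/
def Connected (U : UNet) : Prop :=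
  ∀ u ∈ U.verts, ∀ v ∈ U.verts, Relation.ReflTransGen U.Adj u v

/-- leaf: degree-1 vertex -/
def IsLeaf (U : UNet) (v : ℕ) : Prop := v ∈ U.verts ∧ U.deg v = 1

/-- the network consists of a single vertex -/
def SingleVertex (U : UNet) : Prop := U.verts.card = 1 ∧ U.edges = ∅

/-- the reticulation number of an unrooted network: `|E| - (|V| - 1)` -/
def retNum (U : UNet) : ℕ := U.edges.card - (U.verts.card - 1)

end UNet

/-- `U` is an unrooted binary phylogenetic network with leaf set `X`
(including the degenerate single-vertex network when `|X| = 1`). -/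
def IsUnrootedBinaryNet (U : UNet) (X : Finset ℕ) : Prop :=
  (∃ x, X = {x} ∧ U.verts = {x} ∧ U.edges = ∅) ∨
  ((∀ e ∈ U.edges, ¬ e.IsDiag ∧ ∀ v ∈ e, v ∈ U.verts) ∧
   U.Connected ∧
   (∀ v ∈ U.verts, U.deg v = 1 ∨ U.deg v = 3) ∧
   (∀ v, U.IsLeaf v ↔ v ∈ X))

/-- `[a,b]` is a cherry of the unrooted network `U`. -/
def UCherry (U : UNet) (a b : ℕ) : Prop :=
  a ≠ b ∧ U.IsLeaf a ∧ U.IsLeaf b ∧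
  ((∃ p, s(a, p) ∈ U.edges ∧ s(b, p) ∈ U.edges ∧ p ≠ a ∧ p ≠ b) ∨ U.edges = {s(a, b)})

/-- the edge `{u,v}` lies on a cycle of `U` -/
def UOnCycle (U : UNet) (u v : ℕ) : Prop :=
  s(u, v) ∈ U.edges ∧
  Relation.ReflTransGen (fun x y => x ≠ y ∧ s(x, y) ∈ U.edges ∧ s(x, y) ≠ s(u, v)) u v

/-- `(a,b)` is a reticulated cherry of the unrooted network `U` with reticulation
edge `{u,v}`. -/
def URetCherry (U : UNet) (a b : ℕ) : Prop :=
  a ≠ b ∧ U.IsLeaf a ∧ U.IsLeaf b ∧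
  ∃ u v, s(a, u) ∈ U.edges ∧ s(u, v) ∈ U.edges ∧ s(v, b) ∈ U.edges ∧
    u ≠ v ∧ u ≠ a ∧ v ≠ b ∧ UOnCycle U u v

/-- `W` is obtained from `U` by reducing the cherry `[a,b]`: delete `a` and, if `U` has
at least two edges, suppress the resulting degree-2 vertex. -/
def UReduceCherry (U W : UNet) (a b : ℕ) : Prop :=
  UCherry U a b ∧
  ((U.edges = {s(a, b)} ∧ W.verts = U.verts \ {a} ∧ W.edges = ∅) ∨
   (∃ p g, s(a, p) ∈ U.edges ∧ s(b, p) ∈ U.edges ∧ s(p, g) ∈ U.edges ∧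
      p ≠ a ∧ p ≠ b ∧ g ≠ a ∧ g ≠ b ∧ g ≠ p ∧
      W.verts = U.verts \ {a, p} ∧
      W.edges = insert s(b, g) (U.edges \ {s(a, p), s(b, p), s(p, g)})))

/-- `W` is obtained from `U` by reducing the reticulated cherry `(a,b)`: delete the
reticulation edge `{u,v}` and suppress the two resulting degree-2 vertices. -/
def UReduceRetCherry (U W : UNet) (a b : ℕ) : Prop :=
  URetCherry U a b ∧
  ∃ u v ga gb, s(a, u) ∈ U.edges ∧ s(u, v) ∈ U.edges ∧ s(v, b) ∈ U.edges ∧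
    u ≠ v ∧ u ≠ a ∧ v ≠ b ∧ UOnCycle U u v ∧
    s(u, ga) ∈ U.edges ∧ ga ≠ a ∧ ga ≠ v ∧ ga ≠ u ∧
    s(v, gb) ∈ U.edges ∧ gb ≠ b ∧ gb ≠ u ∧ gb ≠ v ∧
    W.verts = U.verts \ {u, v} ∧
    W.edges = insert s(a, ga) (insert s(b, gb)
      (U.edges \ {s(u, v), s(a, u), s(u, ga), s(v, b), s(v, gb)}))

/-- The step from `U` to `W` is the cherry reduction recorded by the pick `r`
(unrooted version). -/
def UStep (U W : UNet) : Pick → Prop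
  | .cherry x y => UReduceCherry U W x y
  | .ret x y => UReduceRetCherry U W x y

/-- `(Us 0, …, Us k)` is a cherry-reduction sequence of unrooted networks whose associated
cherry-picking sequence is `(rs 0, …, rs (k-1))`. -/
def UCherrySeq (Us : ℕ → UNet) (rs : ℕ → Pick) (k : ℕ) : Prop :=
  ∀ i < k, UStep (Us i) (Us (i + 1)) (rs i)

/-- `(Us 0, …, Us k)` is a cherry-reduction sequence of unrooted networks. -/
def UReductionSeq (Us : ℕ → UNet) (k : ℕ) : Prop :=
  ∀ i < k, ∃ r, UStep (Us i) (Us (i + 1)) r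

/-- The rooted network `R` is an orientation of the unrooted network `U`: `U` is obtained
from `R` by forgetting arc directions and suppressing the root. -/
def IsOrientationOf (R : DNet) (U : UNet) : Prop :=
  (R.arcs = ∅ ∧ U.edges = ∅ ∧ U.verts = R.verts) ∨
  (∃ ρ c₁ c₂, ρ ∈ R.verts ∧ R.inDeg ρ = 0 ∧ c₁ ≠ c₂ ∧
    (ρ, c₁) ∈ R.arcs ∧ (ρ, c₂) ∈ R.arcs ∧
    U.verts = R.verts.erase ρ ∧
    U.edges = insert s(c₁, c₂)
      ((R.arcs.filter (fun p => p.1 ≠ ρ)).image (fun p => s(p.1, p.2))))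

/-- `U` is an unrooted tree-child network on `X`: it has a tree-child orientation. -/
def UnrootedTreeChild (U : UNet) (X : Finset ℕ) : Prop :=
  ∃ R : DNet, IsRootedBinaryNet R X ∧ R.TreeChild ∧ IsOrientationOf R U

/-- The pick `r` is one of the picks associated with the recorded reduction `p`:
it must agree with `p` on cherry reductions, and may swap the two coordinates of a
reticulated-cherry reduction. -/
def PickAssoc : Pick → Pick → Prop
  | .cherry x y, r => r = .cherry x y
  | .ret x y, r => r = .ret x y ∨ r = .ret y x

/-- `X`-labelled isomorphism of unrooted networks. -/
def UIso (X : Finset ℕ) (U W : UNet) : Prop :=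
  ∃ f : ℕ → ℕ, Set.BijOn f ↑U.verts ↑W.verts ∧ (∀ x ∈ X, f x = x) ∧
    W.edges = U.edges.image (Sym2.map f)


/-! ### Auxiliary toolkit -/

namespace TCAux
open DNet Finset

/-- membership in out-filter -/
lemma mem_outF {N : DNet} {v : ℕ} {p : ℕ × ℕ} :
    p ∈ N.arcs.filter (fun p => p.1 = v) ↔ p ∈ N.arcs ∧ p.1 = v := Finset.mem_filter

lemma mem_inF {N : DNet} {v : ℕ} {p : ℕ × ℕ} :
    p ∈ N.arcs.filter (fun p => p.2 = v) ↔ p ∈ N.arcs ∧ p.2 = v := Finset.mem_filter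

lemma outDeg_pos {N : DNet} {v c : ℕ} (h : (v, c) ∈ N.arcs) : N.outDeg v ≠ 0 := by
  have : (v, c) ∈ N.arcs.filter (fun p => p.1 = v) := by simp [h]
  simp only [DNet.outDeg]
  exact Finset.card_ne_zero_of_mem this

lemma inDeg_pos {N : DNet} {v c : ℕ} (h : (c, v) ∈ N.arcs) : N.inDeg v ≠ 0 := by
  have : (c, v) ∈ N.arcs.filter (fun p => p.2 = v) := by simp [h]
  simp only [DNet.inDeg]
  exact Finset.card_ne_zero_of_mem this

lemma no_out_of_leaf {N : DNet} {v c : ℕ} (h : N.outDeg v = 0) : (v, c) ∉ N.arcs :=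
  fun hc => outDeg_pos hc h

lemma parent_unique {N : DNet} {v u w : ℕ} (h : N.inDeg v = 1)
    (hu : (u, v) ∈ N.arcs) (hw : (w, v) ∈ N.arcs) : u = w := by
  have h1 : (u, v) ∈ N.arcs.filter (fun p => p.2 = v) := by simp [hu]
  have h2 : (w, v) ∈ N.arcs.filter (fun p => p.2 = v) := by simp [hw]
  have := Finset.card_le_one.mp (le_of_eq h) _ h1 _ h2
  exact (Prod.mk.injEq _ _ _ _ ▸ this).1

lemma child_unique {N : DNet} {v u w : ℕ} (h : N.outDeg v = 1)
    (hu : (v, u) ∈ N.arcs) (hw : (v, w) ∈ N.arcs) : u = w := by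
  have h1 : (v, u) ∈ N.arcs.filter (fun p => p.1 = v) := by simp [hu]
  have h2 : (v, w) ∈ N.arcs.filter (fun p => p.1 = v) := by simp [hw]
  have := Finset.card_le_one.mp (le_of_eq h) _ h1 _ h2
  exact (Prod.mk.injEq _ _ _ _ ▸ this).2

lemma two_children {N : DNet} {v a b : ℕ} (h : N.outDeg v = 2) (hab : a ≠ b)
    (ha : (v, a) ∈ N.arcs) (hb : (v, b) ∈ N.arcs) :
    ∀ c, (v, c) ∈ N.arcs → c = a ∨ c = b := by
  intro c hc
  have hsub : ({(v, a), (v, b)} : Finset (ℕ × ℕ)) ⊆ N.arcs.filter (fun p => p.1 = v) := by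
    intro x hx
    simp only [Finset.mem_insert, Finset.mem_singleton] at hx
    rcases hx with rfl | rfl <;> simp [ha, hb]
  have hcard : (N.arcs.filter (fun p => p.1 = v)).card ≤ ({(v, a), (v, b)} : Finset (ℕ × ℕ)).card := by
    rw [Finset.card_insert_of_notMem (by simp [hab]), Finset.card_singleton]
    exact le_of_eq h
  have heq := Finset.eq_of_subset_of_card_le hsub hcard
  have : (v, c) ∈ ({(v, a), (v, b)} : Finset (ℕ × ℕ)) := by
    rw [heq]; simp [hc]
  simpa using this

lemma two_parents {N : DNet} {v a b : ℕ} (h : N.inDeg v = 2) (hab : a ≠ b)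
    (ha : (a, v) ∈ N.arcs) (hb : (b, v) ∈ N.arcs) :
    ∀ c, (c, v) ∈ N.arcs → c = a ∨ c = b := by
  intro c hc
  have hsub : ({(a, v), (b, v)} : Finset (ℕ × ℕ)) ⊆ N.arcs.filter (fun p => p.2 = v) := by
    intro x hx
    simp only [Finset.mem_insert, Finset.mem_singleton] at hx
    rcases hx with rfl | rfl <;> simp [ha, hb]
  have hcard : (N.arcs.filter (fun p => p.2 = v)).card ≤ ({(a, v), (b, v)} : Finset (ℕ × ℕ)).card := by
    rw [Finset.card_insert_of_notMem (by simp [hab]), Finset.card_singleton]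
    exact le_of_eq h
  have heq := Finset.eq_of_subset_of_card_le hsub hcard
  have : (c, v) ∈ ({(a, v), (b, v)} : Finset (ℕ × ℕ)) := by
    rw [heq]; simp [hc]
  simpa using this

lemma exists_parent {N : DNet} {v : ℕ} (h : N.inDeg v ≠ 0) : ∃ u, (u, v) ∈ N.arcs := by
  obtain ⟨p, hp⟩ := Finset.card_ne_zero.mp h
  rw [mem_inF] at hp
  exact ⟨p.1, by rw [← hp.2]; exact hp.1⟩

lemma exists_child {N : DNet} {v : ℕ} (h : N.outDeg v ≠ 0) : ∃ u, (v, u) ∈ N.arcs := by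
  obtain ⟨p, hp⟩ := Finset.card_ne_zero.mp h
  rw [mem_outF] at hp
  exact ⟨p.2, by rw [← hp.2]; exact hp.1⟩

lemma exists_two_parents {N : DNet} {v : ℕ} (h : N.inDeg v = 2) :
    ∃ a b, a ≠ b ∧ (a, v) ∈ N.arcs ∧ (b, v) ∈ N.arcs := by
  have h1 : 1 < (N.arcs.filter (fun p => p.2 = v)).card := by rw [← DNet.inDeg] at *; omega
  obtain ⟨p, hp, q, hq, hpq⟩ := Finset.one_lt_card.mp h1
  rw [mem_inF] at hp hq
  refine ⟨p.1, q.1, ?_, by rw [← hp.2]; exact hp.1, by rw [← hq.2]; exact hq.1⟩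
  intro hc
  exact hpq (Prod.ext hc (hp.2.trans hq.2.symm))

lemma exists_two_children {N : DNet} {v : ℕ} (h : N.outDeg v = 2) :
    ∃ a b, a ≠ b ∧ (v, a) ∈ N.arcs ∧ (v, b) ∈ N.arcs := by
  have h1 : 1 < (N.arcs.filter (fun p => p.1 = v)).card := by rw [← DNet.outDeg] at *; omega
  obtain ⟨p, hp, q, hq, hpq⟩ := Finset.one_lt_card.mp h1
  rw [mem_outF] at hp hq
  refine ⟨p.2, q.2, ?_, by rw [← hp.2]; exact hp.1, by rw [← hq.2]; exact hq.1⟩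
  intro hc
  exact hpq (Prod.ext (hp.2.trans hq.2.symm) hc)

lemma outDeg_two_of_two {N : DNet} {v a b : ℕ} (hab : a ≠ b)
    (ha : (v, a) ∈ N.arcs) (hb : (v, b) ∈ N.arcs) : 2 ≤ N.outDeg v := by
  have hsub : ({(v, a), (v, b)} : Finset (ℕ × ℕ)) ⊆ N.arcs.filter (fun p => p.1 = v) := by
    intro x hx
    simp only [Finset.mem_insert, Finset.mem_singleton] at hx
    rcases hx with rfl | rfl <;> simp [ha, hb]
  calc 2 = ({(v, a), (v, b)} : Finset (ℕ × ℕ)).card := by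
            rw [Finset.card_insert_of_notMem (by simp [hab]), Finset.card_singleton]
       _ ≤ _ := Finset.card_le_card hsub

lemma inDeg_two_of_two {N : DNet} {v a b : ℕ} (hab : a ≠ b)
    (ha : (a, v) ∈ N.arcs) (hb : (b, v) ∈ N.arcs) : 2 ≤ N.inDeg v := by
  have hsub : ({(a, v), (b, v)} : Finset (ℕ × ℕ)) ⊆ N.arcs.filter (fun p => p.2 = v) := by
    intro x hx
    simp only [Finset.mem_insert, Finset.mem_singleton] at hx
    rcases hx with rfl | rfl <;> simp [ha, hb]
  calc 2 = ({(a, v), (b, v)} : Finset (ℕ × ℕ)).card := by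
            rw [Finset.card_insert_of_notMem (by simp [hab]), Finset.card_singleton]
       _ ≤ _ := Finset.card_le_card hsub

/-- degrees agree when in-arcs agree -/
lemma inDeg_congr {N M : DNet} {v : ℕ} (h : ∀ u, ((u, v) ∈ M.arcs ↔ (u, v) ∈ N.arcs)) :
    M.inDeg v = N.inDeg v := by
  unfold DNet.inDeg
  congr 1
  ext ⟨x, y⟩
  simp only [Finset.mem_filter]
  constructor
  · rintro ⟨hm, rfl⟩; exact ⟨(h x).mp hm, rfl⟩
  · rintro ⟨hm, rfl⟩; exact ⟨(h x).mpr hm, rfl⟩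

lemma outDeg_congr {N M : DNet} {v : ℕ} (h : ∀ u, ((v, u) ∈ M.arcs ↔ (v, u) ∈ N.arcs)) :
    M.outDeg v = N.outDeg v := by
  unfold DNet.outDeg
  congr 1
  ext ⟨x, y⟩
  simp only [Finset.mem_filter]
  constructor
  · rintro ⟨hm, rfl⟩; exact ⟨(h y).mp hm, rfl⟩
  · rintro ⟨hm, rfl⟩; exact ⟨(h y).mpr hm, rfl⟩

/-- out-degree after swapping one out-arc -/
lemma outDeg_swap {N M : DNet} {v old new : ℕ}
    (h : ∀ u, ((v, u) ∈ M.arcs ↔ (u = new ∨ ((v, u) ∈ N.arcs ∧ u ≠ old))))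
    (hold : (v, old) ∈ N.arcs) (hnew : (v, new) ∉ N.arcs) (hne : new ≠ old) :
    M.outDeg v = N.outDeg v := by
  have hset : M.arcs.filter (fun p => p.1 = v) =
      insert (v, new) ((N.arcs.filter (fun p => p.1 = v)).erase (v, old)) := by
    ext ⟨x, y⟩
    simp only [Finset.mem_filter, Finset.mem_insert, Finset.mem_erase, Prod.mk.injEq, ne_eq,
      not_and]
    constructor
    · rintro ⟨hm, rfl⟩
      rcases (h y).mp hm with rfl | ⟨hy, hy2⟩
      · left; exact ⟨rfl, rfl⟩
      · right; exact ⟨fun _ h => hy2 h, hy, rfl⟩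
    · rintro (⟨rfl, rfl⟩ | ⟨hne2, hy, rfl⟩)
      · exact ⟨(h _).mpr (Or.inl rfl), rfl⟩
      · exact ⟨(h _).mpr (Or.inr ⟨hy, fun hc => hne2 rfl hc⟩), rfl⟩
  unfold DNet.outDeg
  rw [hset, Finset.card_insert_of_notMem (by simp [hne, hnew]),
    Finset.card_erase_of_mem (by simp [hold])]
  have : (N.arcs.filter (fun p => p.1 = v)).card ≠ 0 :=
    Finset.card_ne_zero_of_mem (by simp [hold] : (v, old) ∈ _)
  omega

/-- in-degree after swapping one in-arc -/
lemma inDeg_swap {N M : DNet} {v old new : ℕ}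
    (h : ∀ u, ((u, v) ∈ M.arcs ↔ (u = new ∨ ((u, v) ∈ N.arcs ∧ u ≠ old))))
    (hold : (old, v) ∈ N.arcs) (hnew : (new, v) ∉ N.arcs) (hne : new ≠ old) :
    M.inDeg v = N.inDeg v := by
  have hset : M.arcs.filter (fun p => p.2 = v) =
      insert (new, v) ((N.arcs.filter (fun p => p.2 = v)).erase (old, v)) := by
    ext ⟨x, y⟩
    simp only [Finset.mem_filter, Finset.mem_insert, Finset.mem_erase, Prod.mk.injEq, ne_eq,
      not_and]
    constructor
    · rintro ⟨hm, rfl⟩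
      rcases (h x).mp hm with rfl | ⟨hy, hy2⟩
      · left; exact ⟨rfl, rfl⟩
      · right; exact ⟨fun h _ => hy2 h, hy, rfl⟩
    · rintro (⟨rfl, rfl⟩ | ⟨hne2, hy, rfl⟩)
      · exact ⟨(h _).mpr (Or.inl rfl), rfl⟩
      · exact ⟨(h _).mpr (Or.inr ⟨hy, fun hc => hne2 hc rfl⟩), rfl⟩
  unfold DNet.inDeg
  rw [hset, Finset.card_insert_of_notMem (by simp [hne, hnew]),
    Finset.card_erase_of_mem (by simp [hold])]
  have : (N.arcs.filter (fun p => p.2 = v)).card ≠ 0 :=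
    Finset.card_ne_zero_of_mem (by simp [hold] : (old, v) ∈ _)
  omega

/-- in-degree set to one: the in-arcs of `v` in `M` are exactly `{(u,v)}` -/
lemma inDeg_eq_one {M : DNet} {v u : ℕ}
    (h : ∀ w, ((w, v) ∈ M.arcs ↔ w = u)) : M.inDeg v = 1 := by
  unfold DNet.inDeg
  have : M.arcs.filter (fun p => p.2 = v) = {(u, v)} := by
    ext ⟨x, y⟩
    simp only [Finset.mem_filter, Finset.mem_singleton, Prod.mk.injEq]
    constructor
    · rintro ⟨hm, rfl⟩; exact ⟨(h x).mp hm, rfl⟩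
    · rintro ⟨rfl, rfl⟩; exact ⟨(h _).mpr rfl, rfl⟩
  rw [this, Finset.card_singleton]

lemma outDeg_eq_zero {M : DNet} {v : ℕ}
    (h : ∀ w, (v, w) ∉ M.arcs) : M.outDeg v = 0 := by
  unfold DNet.outDeg
  rw [Finset.card_eq_zero]
  ext ⟨x, y⟩
  simp only [Finset.mem_filter, Finset.notMem_empty, iff_false, not_and]
  rintro hm rfl
  exact h y hm

lemma inDeg_eq_zero {M : DNet} {v : ℕ}
    (h : ∀ w, (w, v) ∉ M.arcs) : M.inDeg v = 0 := by
  unfold DNet.inDeg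
  rw [Finset.card_eq_zero]
  ext ⟨x, y⟩
  simp only [Finset.mem_filter, Finset.notMem_empty, iff_false, not_and]
  rintro hm rfl
  exact h x hm

/-- out-degree after swapping two out-arcs -/
lemma outDeg_swap2 {N M : DNet} {v o₁ o₂ n₁ n₂ : ℕ}
    (h : ∀ u, ((v, u) ∈ M.arcs ↔ (u = n₁ ∨ u = n₂ ∨ ((v, u) ∈ N.arcs ∧ u ≠ o₁ ∧ u ≠ o₂))))
    (ho₁ : (v, o₁) ∈ N.arcs) (ho₂ : (v, o₂) ∈ N.arcs) (hoo : o₁ ≠ o₂)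
    (hn₁ : (v, n₁) ∉ N.arcs) (hn₂ : (v, n₂) ∉ N.arcs) (hnn : n₁ ≠ n₂) :
    M.outDeg v = N.outDeg v := by
  have hset : M.arcs.filter (fun p => p.1 = v) =
      insert (v, n₁) (insert (v, n₂)
        (((N.arcs.filter (fun p => p.1 = v)).erase (v, o₁)).erase (v, o₂))) := by
    ext ⟨x, y⟩
    simp only [Finset.mem_filter, Finset.mem_insert, Finset.mem_erase, Prod.mk.injEq, ne_eq,
      not_and]
    constructor
    · rintro ⟨hm, rfl⟩
      rcases (h y).mp hm with rfl | rfl | ⟨hy, hy1, hy2⟩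
      · exact Or.inl ⟨rfl, rfl⟩
      · exact Or.inr (Or.inl ⟨rfl, rfl⟩)
      · exact Or.inr (Or.inr ⟨fun _ hc => hy2 hc, fun _ hc => hy1 hc, hy, rfl⟩)
    · rintro (⟨rfl, rfl⟩ | ⟨rfl, rfl⟩ | ⟨h2, h1, hy, rfl⟩)
      · exact ⟨(h _).mpr (Or.inl rfl), rfl⟩
      · exact ⟨(h _).mpr (Or.inr (Or.inl rfl)), rfl⟩
      · exact ⟨(h _).mpr (Or.inr (Or.inr ⟨hy, fun hc => h1 rfl hc, fun hc => h2 rfl hc⟩)), rfl⟩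
  unfold DNet.outDeg
  have m1 : (v, o₁) ∈ N.arcs.filter (fun p => p.1 = v) := by simp [ho₁]
  have m2 : (v, o₂) ∈ (N.arcs.filter (fun p => p.1 = v)).erase (v, o₁) :=
    Finset.mem_erase.mpr ⟨by simp only [ne_eq, Prod.mk.injEq, not_and]; exact fun _ => hoo.symm,
      by simp [ho₂]⟩
  have hins1 : (v, n₁) ∉ insert (v, n₂)
      (((N.arcs.filter (fun p => p.1 = v)).erase (v, o₁)).erase (v, o₂)) := by
    intro hc
    rcases Finset.mem_insert.mp hc with hc | hc
    · exact hnn (by simpa using congrArg Prod.snd hc)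
    · exact hn₁ (Finset.mem_filter.mp
        (Finset.mem_of_mem_erase (Finset.mem_of_mem_erase hc))).1
  have hins2 : (v, n₂) ∉
      ((N.arcs.filter (fun p => p.1 = v)).erase (v, o₁)).erase (v, o₂) := fun hc =>
    hn₂ (Finset.mem_filter.mp (Finset.mem_of_mem_erase (Finset.mem_of_mem_erase hc))).1
  rw [hset, Finset.card_insert_of_notMem hins1, Finset.card_insert_of_notMem hins2,
    Finset.card_erase_of_mem m2, Finset.card_erase_of_mem m1]
  have h2 : 2 ≤ (N.arcs.filter (fun p => p.1 = v)).card := by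
    have := outDeg_two_of_two hoo ho₁ ho₂
    simpa [DNet.outDeg] using this
  omega

/-- transfer acyclicity along an arc-refinement -/
lemma acyclic_of (N M : DNet) (h : ∀ u v, M.Arc u v → Relation.TransGen N.Arc u v)
    (hN : N.Acyclic) : M.Acyclic := by
  intro v hv
  apply hN v
  have := Relation.TransGen.mono h v v hv
  rwa [Relation.transGen_idem] at this

/-- the interesting clauses of a (non-degenerate) rooted binary network -/
structure BinFacts (N : DNet) (X : Finset ℕ) : Prop where
  ends : ∀ p ∈ N.arcs, p.1 ∈ N.verts ∧ p.2 ∈ N.verts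
  noloop : ∀ p ∈ N.arcs, p.1 ≠ p.2
  acyc : N.Acyclic
  root : ∃! ρ, ρ ∈ N.verts ∧ N.inDeg ρ = 0
  classify : ∀ v ∈ N.verts, N.IsRoot v ∨ N.IsLeaf v ∨ N.IsTreeVertex v ∨ N.IsRet v
  leafX : ∀ v, N.IsLeaf v ↔ v ∈ X

lemma bin_cases {N : DNet} {X : Finset ℕ} (h : IsRootedBinaryNet N X) :
    N.SingleVertex ∨ BinFacts N X := by
  rcases h with ⟨x, _, hv, ha⟩ | ⟨h1, h2, h3, h4, h5, h6⟩
  · exact Or.inl ⟨by rw [hv]; simp, ha⟩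
  · exact Or.inr ⟨h1, h2, h3, h4, h5, h6⟩

lemma single_not_binfacts {N : DNet} {X : Finset ℕ} (h : BinFacts N X)
    (hs : N.SingleVertex) : False := by
  obtain ⟨ρ, ⟨hρv, hρi⟩, _⟩ := h.root
  rcases h.classify ρ hρv with hr | hl | ht | hq
  · obtain ⟨c, hc⟩ := exists_child (by rw [hr.2.2]; omega)
    have := (h.ends _ hc).2
    have hcρ : c ≠ ρ := fun hcc => h.noloop _ hc (by simp [hcc])
    obtain ⟨y, hy⟩ := Finset.card_eq_one.mp hs.1
    rw [hy] at hρv this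
    simp only [Finset.mem_singleton] at hρv this
    exact hcρ (this.trans hρv.symm)
  · have := hl.2.1; omega
  · have := ht.2.1; omega
  · have := hq.2.1; omega

/-- in a `BinFacts` network, a vertex with an incoming arc is a leaf, tree vertex
or reticulation -/
lemma classify_child {N : DNet} {X : Finset ℕ} (h : BinFacts N X) {u v : ℕ}
    (hv : (u, v) ∈ N.arcs) : N.IsLeaf v ∨ N.IsTreeVertex v ∨ N.IsRet v := by
  rcases h.classify v (h.ends _ hv).2 with hr | hl | ht | hq
  · exact absurd hr.2.1 (inDeg_pos hv)
  · exact Or.inl hl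
  · exact Or.inr (Or.inl ht)
  · exact Or.inr (Or.inr hq)

/-- minimal element of a finset w.r.t. reachability in an acyclic digraph -/
lemma exists_min (N : DNet) (hac : N.Acyclic) :
    ∀ S : Finset ℕ, S.Nonempty → ∃ v ∈ S, ∀ u ∈ S, ¬ Relation.TransGen N.Arc u v := by
  classical
  intro S
  induction S using Finset.strongInductionOn with
  | _ S ih =>
    intro hS
    obtain ⟨v, hv⟩ := hS
    set T := S.filter (fun u => Relation.TransGen N.Arc u v) with hT
    by_cases hTne : T.Nonempty
    · have hTS : T ⊂ S := by
        refine Finset.ssubset_iff_of_subset (Finset.filter_subset _ _) |>.mpr ⟨v, hv, ?_⟩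
        simp only [hT, Finset.mem_filter, not_and]
        exact fun _ => hac v
      obtain ⟨w, hwT, hwmin⟩ := ih T hTS hTne
      refine ⟨w, Finset.mem_of_mem_filter _ hwT, fun u hu hc => ?_⟩
      have hwv : Relation.TransGen N.Arc w v := (Finset.mem_filter.mp hwT).2
      exact hwmin u (Finset.mem_filter.mpr ⟨hu, hc.trans hwv⟩) hc
    · refine ⟨v, hv, fun u hu hc => ?_⟩
      exact hTne ⟨u, Finset.mem_filter.mpr ⟨hu, hc⟩⟩

/-- maximal element of a finset w.r.t. reachability in an acyclic digraph -/
lemma exists_max (N : DNet) (hac : N.Acyclic) :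
    ∀ S : Finset ℕ, S.Nonempty → ∃ v ∈ S, ∀ u ∈ S, ¬ Relation.TransGen N.Arc v u := by
  classical
  intro S
  induction S using Finset.strongInductionOn with
  | _ S ih =>
    intro hS
    obtain ⟨v, hv⟩ := hS
    set T := S.filter (fun u => Relation.TransGen N.Arc v u) with hT
    by_cases hTne : T.Nonempty
    · have hTS : T ⊂ S := by
        refine Finset.ssubset_iff_of_subset (Finset.filter_subset _ _) |>.mpr ⟨v, hv, ?_⟩
        simp only [hT, Finset.mem_filter, not_and]
        exact fun _ => hac v
      obtain ⟨w, hwT, hwmax⟩ := ih T hTS hTne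
      refine ⟨w, Finset.mem_of_mem_filter _ hwT, fun u hu hc => ?_⟩
      have hvw : Relation.TransGen N.Arc v w := (Finset.mem_filter.mp hwT).2
      exact hwmax u (Finset.mem_filter.mpr ⟨hu, hvw.trans hc⟩) hc
    · refine ⟨v, hv, fun u hu hc => ?_⟩
      exact hTne ⟨u, Finset.mem_filter.mpr ⟨hu, hc⟩⟩

lemma card_sdiff_pair {s : Finset ℕ} {x y : ℕ} (hx : x ∈ s) (hy : y ∈ s) (hxy : x ≠ y) :
    (s \ {x, y}).card + 2 = s.card := by
  have hsub : ({x, y} : Finset ℕ) ⊆ s := by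
    intro z hz
    simp only [Finset.mem_insert, Finset.mem_singleton] at hz
    rcases hz with rfl | rfl <;> assumption
  have h2 : ({x, y} : Finset ℕ).card = 2 := by
    rw [Finset.card_insert_of_notMem (by simp [hxy]), Finset.card_singleton]
  have hle := Finset.card_le_card hsub
  rw [Finset.card_sdiff_of_subset hsub, h2]
  omega

/-- All the structural facts about a reticulated-cherry reduction. -/
structure RF (N M : DNet) (a b pa pb qa qb : ℕ) : Prop where
  ab : a ≠ b
  ain : N.inDeg a = 1
  aout : N.outDeg a = 0
  bin' : N.inDeg b = 1
  bout : N.outDeg b = 0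
  av : a ∈ N.verts
  bv : b ∈ N.verts
  paa : (pa, a) ∈ N.arcs
  pbb : (pb, b) ∈ N.arcs
  pbpa : (pb, pa) ∈ N.arcs
  qapa : (qa, pa) ∈ N.arcs
  qbpb : (qb, pb) ∈ N.arcs
  qa_pb : qa ≠ pb
  pain : N.inDeg pa = 2
  paout : N.outDeg pa = 1
  pbin : N.inDeg pb = 1
  pbout : N.outDeg pb = 2
  pav : pa ∈ N.verts
  pbv : pb ∈ N.verts
  pa_a : pa ≠ a
  pa_b : pa ≠ b
  pa_pb : pa ≠ pb
  pa_qa : pa ≠ qa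
  pa_qb : pa ≠ qb
  pb_a : pb ≠ a
  pb_b : pb ≠ b
  pb_qb : pb ≠ qb
  qa_a : qa ≠ a
  qa_b : qa ≠ b
  qb_a : qb ≠ a
  qb_b : qb ≠ b
  aparent : ∀ z, (z, a) ∈ N.arcs → z = pa
  bparent : ∀ z, (z, b) ∈ N.arcs → z = pb
  pachild : ∀ z, (pa, z) ∈ N.arcs → z = a
  paparents : ∀ z, (z, pa) ∈ N.arcs → z = pb ∨ z = qa
  pbchildren : ∀ z, (pb, z) ∈ N.arcs → z = pa ∨ z = b
  pbparent : ∀ z, (z, pb) ∈ N.arcs → z = qb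
  hv : M.verts = N.verts \ {pa, pb}
  mem : ∀ u v, ((u, v) ∈ M.arcs ↔ ((u = qa ∧ v = a) ∨ (u = qb ∧ v = b) ∨
    ((u, v) ∈ N.arcs ∧ ¬(u = pb ∧ v = pa) ∧ ¬(u = pa ∧ v = a) ∧ ¬(u = qa ∧ v = pa) ∧
     ¬(u = pb ∧ v = b) ∧ ¬(u = qb ∧ v = pb))))
  main : M.inDeg a = 1
  maout : M.outDeg a = 0
  mbin : M.inDeg b = 1
  mbout : M.outDeg b = 0
  mqaa : (qa, a) ∈ M.arcs
  mqbb : (qb, b) ∈ M.arcs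
  mqaout : M.outDeg qa = N.outDeg qa
  mqain : M.inDeg qa = N.inDeg qa
  mqbout : M.outDeg qb = N.outDeg qb
  mqbin : M.inDeg qb = N.inDeg qb
  mgin : ∀ v, v ≠ a → v ≠ b → v ≠ pa → v ≠ pb → M.inDeg v = N.inDeg v
  mgout : ∀ v, v ≠ pa → v ≠ pb → v ≠ qa → v ≠ qb → M.outDeg v = N.outDeg v
  mpain : M.inDeg pa = 0
  mpbin : M.inDeg pb = 0
  card2 : M.verts.card + 2 = N.verts.card

lemma rf_of {N M : DNet} {X : Finset ℕ} {a b : ℕ} (hb : BinFacts N X)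
    (h : RReduceRetCherry N M a b) : ∃ pa pb qa qb, RF N M a b pa pb qa qb := by
  obtain ⟨⟨hab, hla, hlb, -⟩, pa, pb, qa, qb, paa, pbb, hret, pbpa, qapa, qa_pb, qbpb, hv, harcs⟩ := h
  have ain : N.inDeg a = 1 := hla.2.1
  have aout : N.outDeg a = 0 := hla.2.2
  have bin' : N.inDeg b = 1 := hlb.2.1
  have bout : N.outDeg b = 0 := hlb.2.2
  have pain : N.inDeg pa = 2 := hret.2.1
  have paout : N.outDeg pa = 1 := hret.2.2
  have pa_a : pa ≠ a := fun e => by rw [e] at paout; omega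
  have pa_b : pa ≠ b := fun e => by rw [e] at paout; omega
  have pbout2 : 2 ≤ N.outDeg pb := outDeg_two_of_two pa_b pbpa pbb
  have hpbcl := classify_child hb qbpb
  have pbtree : N.IsTreeVertex pb := by
    rcases hpbcl with hl | ht | hq
    · rw [hl.2.2] at pbout2; omega
    · exact ht
    · rw [hq.2.2] at pbout2; omega
  have pbin : N.inDeg pb = 1 := pbtree.2.1
  have pbout : N.outDeg pb = 2 := pbtree.2.2
  have pa_pb : pa ≠ pb := fun e => by rw [e] at paout; omega
  have pa_qa : pa ≠ qa := fun e => hb.noloop _ qapa (by simp [e])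
  have pb_b : pb ≠ b := fun e => hb.noloop _ pbb (by simp [e])
  have pb_a : pb ≠ a := fun e => by rw [e] at pbout; omega
  have pb_qb : pb ≠ qb := fun e => hb.noloop _ qbpb (by simp [e])
  have pachild : ∀ z, (pa, z) ∈ N.arcs → z = a := fun z hz => child_unique paout hz paa
  have pa_qb : pa ≠ qb := by
    intro e
    have h1 : (pa, pb) ∈ N.arcs := by rw [e]; exact qbpb
    exact pb_a (pachild _ h1)
  have qa_a : qa ≠ a := fun e => outDeg_pos (e ▸ qapa) aout
  have qa_b : qa ≠ b := fun e => outDeg_pos (e ▸ qapa) bout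
  have qb_a : qb ≠ a := fun e => outDeg_pos (e ▸ qbpb) aout
  have qb_b : qb ≠ b := fun e => outDeg_pos (e ▸ qbpb) bout
  have aparent : ∀ z, (z, a) ∈ N.arcs → z = pa := fun z hz => parent_unique ain hz paa
  have bparent : ∀ z, (z, b) ∈ N.arcs → z = pb := fun z hz => parent_unique bin' hz pbb
  have paparents : ∀ z, (z, pa) ∈ N.arcs → z = pb ∨ z = qa :=
    two_parents pain (fun e => qa_pb e.symm) pbpa qapa
  have pbchildren : ∀ z, (pb, z) ∈ N.arcs → z = pa ∨ z = b := two_children pbout pa_b pbpa pbb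
  have pbparent : ∀ z, (z, pb) ∈ N.arcs → z = qb := fun z hz => parent_unique pbin hz qbpb
  have mem : ∀ u v, ((u, v) ∈ M.arcs ↔ ((u = qa ∧ v = a) ∨ (u = qb ∧ v = b) ∨
      ((u, v) ∈ N.arcs ∧ ¬(u = pb ∧ v = pa) ∧ ¬(u = pa ∧ v = a) ∧ ¬(u = qa ∧ v = pa) ∧
       ¬(u = pb ∧ v = b) ∧ ¬(u = qb ∧ v = pb)))) := by
    intro u v
    rw [harcs]
    simp only [Finset.mem_insert, Finset.mem_sdiff, Finset.mem_singleton, Prod.mk.injEq, not_or]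
    all_goals tauto
  have qaa_nin : (qa, a) ∉ N.arcs := fun hc => pa_qa (aparent _ hc).symm
  have qbb_nin : (qb, b) ∉ N.arcs := fun hc => pb_qb (bparent _ hc).symm
  have main : M.inDeg a = 1 := by
    have key : ∀ u, ((u, a) ∈ M.arcs ↔ (u = qa ∨ ((u, a) ∈ N.arcs ∧ u ≠ pa))) := by
      intro u
      rw [mem u a]
      constructor
      · rintro (⟨rfl, -⟩ | ⟨-, hba⟩ | ⟨hN', -, h2, -, -, -⟩)
        · exact Or.inl rfl
        · exact absurd hba hab
        · exact Or.inr ⟨hN', fun e => h2 ⟨e, rfl⟩⟩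
      · rintro (rfl | ⟨hN', hne⟩)
        · exact Or.inl ⟨rfl, rfl⟩
        · refine Or.inr (Or.inr ⟨hN', ?_, ?_, ?_, ?_, ?_⟩)
          · exact fun ⟨_, e2⟩ => pa_a e2.symm
          · exact fun ⟨e1, _⟩ => hne e1
          · exact fun ⟨_, e2⟩ => pa_a e2.symm
          · exact fun ⟨_, e2⟩ => hab e2
          · exact fun ⟨_, e2⟩ => pb_a e2.symm
    rw [inDeg_swap key paa qaa_nin (fun e => pa_qa e.symm)]
    exact ain
  have maout : M.outDeg a = 0 := by
    apply outDeg_eq_zero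
    intro w hc
    rcases (mem a w).mp hc with ⟨e, -⟩ | ⟨e, -⟩ | ⟨hc', -⟩
    · exact qa_a e.symm
    · exact qb_a e.symm
    · exact no_out_of_leaf aout hc'
  have mbin : M.inDeg b = 1 := by
    have key : ∀ u, ((u, b) ∈ M.arcs ↔ (u = qb ∨ ((u, b) ∈ N.arcs ∧ u ≠ pb))) := by
      intro u
      rw [mem u b]
      constructor
      · rintro (⟨-, hba⟩ | ⟨rfl, -⟩ | ⟨hN', -, -, -, h4, -⟩)
        · exact absurd hba.symm hab
        · exact Or.inl rfl
        · exact Or.inr ⟨hN', fun e => h4 ⟨e, rfl⟩⟩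
      · rintro (rfl | ⟨hN', hne⟩)
        · exact Or.inr (Or.inl ⟨rfl, rfl⟩)
        · refine Or.inr (Or.inr ⟨hN', ?_, ?_, ?_, ?_, ?_⟩)
          · exact fun ⟨_, e2⟩ => pa_b e2.symm
          · exact fun ⟨_, e2⟩ => hab e2.symm
          · exact fun ⟨_, e2⟩ => pa_b e2.symm
          · exact fun ⟨e1, _⟩ => hne e1
          · exact fun ⟨_, e2⟩ => pb_b e2.symm
    rw [inDeg_swap key pbb qbb_nin (fun e => pb_qb e.symm)]
    exact bin'
  have mbout : M.outDeg b = 0 := by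
    apply outDeg_eq_zero
    intro w hc
    rcases (mem b w).mp hc with ⟨e, -⟩ | ⟨e, -⟩ | ⟨hc', -⟩
    · exact qa_b e.symm
    · exact qb_b e.symm
    · exact no_out_of_leaf bout hc'
  have mqaa : (qa, a) ∈ M.arcs := (mem qa a).mpr (Or.inl ⟨rfl, rfl⟩)
  have mqbb : (qb, b) ∈ M.arcs := (mem qb b).mpr (Or.inr (Or.inl ⟨rfl, rfl⟩))
  have mqaout : M.outDeg qa = N.outDeg qa := by
    by_cases hq : qa = qb
    · subst hq
      refine outDeg_swap2 (N := N) (o₁ := pa) (o₂ := pb) (n₁ := a) (n₂ := b) ?_ qapa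
        qbpb pa_pb qaa_nin qbb_nin hab
      intro u
      rw [mem qa u]
      constructor
      · rintro (⟨-, rfl⟩ | ⟨-, rfl⟩ | ⟨hN', h1, -, h3, h4, h5⟩)
        · exact Or.inl rfl
        · exact Or.inr (Or.inl rfl)
        · refine Or.inr (Or.inr ⟨hN', fun e => h3 ⟨rfl, e⟩, fun e => h5 ⟨rfl, e⟩⟩)
      · rintro (rfl | rfl | ⟨hN', h1, h2⟩)
        · exact Or.inl ⟨rfl, rfl⟩
        · exact Or.inr (Or.inl ⟨rfl, rfl⟩)
        · refine Or.inr (Or.inr ⟨hN', ?_, ?_, ?_, ?_, ?_⟩)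
          · exact fun ⟨e1, _⟩ => qa_pb e1
          · exact fun ⟨e1, _⟩ => pa_qa e1.symm
          · exact fun ⟨_, e2⟩ => h1 e2
          · exact fun ⟨e1, _⟩ => qa_pb e1
          · exact fun ⟨_, e2⟩ => h2 e2
    · refine outDeg_swap (N := N) (old := pa) (new := a) ?_ qapa qaa_nin (fun e => pa_a e.symm)
      intro u
      rw [mem qa u]
      constructor
      · rintro (⟨-, rfl⟩ | ⟨e, -⟩ | ⟨hN', -, -, h3, -, -⟩)
        · exact Or.inl rfl
        · exact absurd e hq
        · exact Or.inr ⟨hN', fun e => h3 ⟨rfl, e⟩⟩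
      · rintro (rfl | ⟨hN', hne⟩)
        · exact Or.inl ⟨rfl, rfl⟩
        · refine Or.inr (Or.inr ⟨hN', ?_, ?_, ?_, ?_, ?_⟩)
          · exact fun ⟨e1, _⟩ => qa_pb e1
          · exact fun ⟨e1, _⟩ => pa_qa e1.symm
          · exact fun ⟨_, e2⟩ => hne e2
          · exact fun ⟨e1, _⟩ => qa_pb e1
          · exact fun ⟨e1, _⟩ => hq e1
  have mqain : M.inDeg qa = N.inDeg qa := by
    apply inDeg_congr
    intro u
    rw [mem u qa]
    constructor
    · rintro (⟨-, e⟩ | ⟨-, e⟩ | ⟨hN', -⟩)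
      · exact absurd e qa_a
      · exact absurd e qa_b
      · exact hN'
    · intro hN'
      refine Or.inr (Or.inr ⟨hN', ?_, ?_, ?_, ?_, ?_⟩)
      · exact fun ⟨_, e2⟩ => pa_qa e2.symm
      · exact fun ⟨_, e2⟩ => qa_a e2
      · exact fun ⟨_, e2⟩ => pa_qa e2.symm
      · exact fun ⟨_, e2⟩ => qa_b e2
      · exact fun ⟨_, e2⟩ => qa_pb e2
  have mqbout : M.outDeg qb = N.outDeg qb := by
    by_cases hq : qa = qb
    · rw [← hq]; exact mqaout
    · refine outDeg_swap (N := N) (old := pb) (new := b) ?_ qbpb qbb_nin (fun e => pb_b e.symm)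
      intro u
      rw [mem qb u]
      constructor
      · rintro (⟨e, -⟩ | ⟨-, rfl⟩ | ⟨hN', -, -, -, -, h5⟩)
        · exact absurd e.symm hq
        · exact Or.inl rfl
        · exact Or.inr ⟨hN', fun e => h5 ⟨rfl, e⟩⟩
      · rintro (rfl | ⟨hN', hne⟩)
        · exact Or.inr (Or.inl ⟨rfl, rfl⟩)
        · refine Or.inr (Or.inr ⟨hN', ?_, ?_, ?_, ?_, ?_⟩)
          · exact fun ⟨e1, _⟩ => pb_qb e1.symm
          · exact fun ⟨e1, _⟩ => pa_qb e1.symm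
          · exact fun ⟨e1, _⟩ => hq e1.symm
          · exact fun ⟨e1, _⟩ => pb_qb e1.symm
          · exact fun ⟨_, e2⟩ => hne e2
  have mqbin : M.inDeg qb = N.inDeg qb := by
    apply inDeg_congr
    intro u
    rw [mem u qb]
    constructor
    · rintro (⟨-, e⟩ | ⟨-, e⟩ | ⟨hN', -⟩)
      · exact absurd e qb_a
      · exact absurd e qb_b
      · exact hN'
    · intro hN'
      refine Or.inr (Or.inr ⟨hN', ?_, ?_, ?_, ?_, ?_⟩)
      · exact fun ⟨_, e2⟩ => pa_qb e2.symm
      · exact fun ⟨_, e2⟩ => qb_a e2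
      · exact fun ⟨_, e2⟩ => pa_qb e2.symm
      · exact fun ⟨_, e2⟩ => qb_b e2
      · exact fun ⟨_, e2⟩ => pb_qb e2.symm
  have mgin : ∀ v, v ≠ a → v ≠ b → v ≠ pa → v ≠ pb → M.inDeg v = N.inDeg v := by
    intro v hva hvb hvpa hvpb
    apply inDeg_congr
    intro u
    rw [mem u v]
    constructor
    · rintro (⟨-, e⟩ | ⟨-, e⟩ | ⟨hN', -⟩)
      · exact absurd e hva
      · exact absurd e hvb
      · exact hN'
    · intro hN'
      refine Or.inr (Or.inr ⟨hN', ?_, ?_, ?_, ?_, ?_⟩)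
      · exact fun ⟨_, e2⟩ => hvpa e2
      · exact fun ⟨_, e2⟩ => hva e2
      · exact fun ⟨_, e2⟩ => hvpa e2
      · exact fun ⟨_, e2⟩ => hvb e2
      · exact fun ⟨_, e2⟩ => hvpb e2
  have mgout : ∀ v, v ≠ pa → v ≠ pb → v ≠ qa → v ≠ qb → M.outDeg v = N.outDeg v := by
    intro v hvpa hvpb hvqa hvqb
    apply outDeg_congr
    intro u
    rw [mem v u]
    constructor
    · rintro (⟨e, -⟩ | ⟨e, -⟩ | ⟨hN', -⟩)
      · exact absurd e hvqa
      · exact absurd e hvqb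
      · exact hN'
    · intro hN'
      refine Or.inr (Or.inr ⟨hN', ?_, ?_, ?_, ?_, ?_⟩)
      · exact fun ⟨e1, _⟩ => hvpb e1
      · exact fun ⟨e1, _⟩ => hvpa e1
      · exact fun ⟨e1, _⟩ => hvqa e1
      · exact fun ⟨e1, _⟩ => hvpb e1
      · exact fun ⟨e1, _⟩ => hvqb e1
  exact ⟨pa, pb, qa, qb,
    { ab := hab, ain := ain, aout := aout, bin' := bin', bout := bout,
      av := hla.1, bv := hlb.1,
      paa := paa, pbb := pbb, pbpa := pbpa, qapa := qapa, qbpb := qbpb, qa_pb := qa_pb,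
      pain := pain, paout := paout, pbin := pbin, pbout := pbout,
      pav := (hb.ends _ paa).1, pbv := (hb.ends _ pbb).1,
      pa_a := pa_a, pa_b := pa_b, pa_pb := pa_pb, pa_qa := pa_qa, pa_qb := pa_qb,
      pb_a := pb_a, pb_b := pb_b, pb_qb := pb_qb,
      qa_a := qa_a, qa_b := qa_b, qb_a := qb_a, qb_b := qb_b,
      aparent := aparent, bparent := bparent, pachild := pachild,
      paparents := paparents, pbchildren := pbchildren, pbparent := pbparent,
      hv := hv, mem := mem,
      main := main, maout := maout, mbin := mbin, mbout := mbout,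
      mqaa := mqaa, mqbb := mqbb,
      mqaout := mqaout, mqain := mqain, mqbout := mqbout, mqbin := mqbin,
      mgin := mgin, mgout := mgout,
      mpain := by
        apply inDeg_eq_zero
        intro w hc
        rcases (mem w pa).mp hc with ⟨-, e⟩ | ⟨-, e⟩ | ⟨hc', h1, -, h3, -, -⟩
        · exact pa_a e
        · exact pa_b e
        · rcases paparents w hc' with rfl | rfl
          · exact h1 ⟨rfl, rfl⟩
          · exact h3 ⟨rfl, rfl⟩,
      mpbin := by
        apply inDeg_eq_zero
        intro w hc
        rcases (mem w pb).mp hc with ⟨-, e⟩ | ⟨-, e⟩ | ⟨hc', -, -, -, -, h5⟩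
        · exact pb_a e
        · exact pb_b e
        · exact h5 ⟨pbparent w hc', rfl⟩,
      card2 := hv ▸ card_sdiff_pair (hb.ends _ paa).1 (hb.ends _ pbb).1 pa_pb }⟩

/-- All the structural facts about an (inner) cherry reduction. -/
structure CF (N M : DNet) (a b p g : ℕ) : Prop where
  ab : a ≠ b
  ain : N.inDeg a = 1
  aout : N.outDeg a = 0
  bin' : N.inDeg b = 1
  bout : N.outDeg b = 0
  av : a ∈ N.verts
  bv : b ∈ N.verts
  paa : (p, a) ∈ N.arcs
  pbb : (p, b) ∈ N.arcs
  gp : (g, p) ∈ N.arcs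
  pin : N.inDeg p = 1
  pout : N.outDeg p = 2
  pv : p ∈ N.verts
  gv : g ∈ N.verts
  p_a : p ≠ a
  p_b : p ≠ b
  p_g : p ≠ g
  g_a : g ≠ a
  g_b : g ≠ b
  aparent : ∀ z, (z, a) ∈ N.arcs → z = p
  bparent : ∀ z, (z, b) ∈ N.arcs → z = p
  pchildren : ∀ z, (p, z) ∈ N.arcs → z = a ∨ z = b
  pparent : ∀ z, (z, p) ∈ N.arcs → z = g
  hv : M.verts = N.verts \ {a, p}
  mem : ∀ u v, ((u, v) ∈ M.arcs ↔ ((u = g ∧ v = b) ∨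
    ((u, v) ∈ N.arcs ∧ ¬(u = g ∧ v = p) ∧ ¬(u = p ∧ v = a) ∧ ¬(u = p ∧ v = b))))
  mbin : M.inDeg b = 1
  mbout : M.outDeg b = 0
  mgb : (g, b) ∈ M.arcs
  mgout : M.outDeg g = N.outDeg g
  mgin2 : M.inDeg g = N.inDeg g
  mgin : ∀ v, v ≠ a → v ≠ b → v ≠ p → M.inDeg v = N.inDeg v
  mgout' : ∀ v, v ≠ g → v ≠ p → M.outDeg v = N.outDeg v
  mpin : M.inDeg p = 0
  card2 : M.verts.card + 2 = N.verts.card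

lemma cf_of {N M : DNet} {X : Finset ℕ} {a b : ℕ} (hb : BinFacts N X)
    (h : RReduceCherry N M a b) :
    (N.TreeChild ∧ M.SingleVertex ∧ IsRootedBinaryNet M {b} ∧
      M.verts.card + 2 = N.verts.card ∧ ∃ p, N.arcs = {(p, a), (p, b)}) ∨
    (∃ p g, CF N M a b p g) := by
  obtain ⟨⟨hab, hla, hlb, -⟩, p, paa, pbb, hcase⟩ := h
  have ain : N.inDeg a = 1 := hla.2.1
  have aout : N.outDeg a = 0 := hla.2.2
  have bin' : N.inDeg b = 1 := hlb.2.1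
  have bout : N.outDeg b = 0 := hlb.2.2
  have pout2 : 2 ≤ N.outDeg p := outDeg_two_of_two hab paa pbb
  have p_a : p ≠ a := fun e => by rw [e] at pout2; omega
  have p_b : p ≠ b := fun e => by rw [e] at pout2; omega
  have pv : p ∈ N.verts := (hb.ends _ paa).1
  have aparent : ∀ z, (z, a) ∈ N.arcs → z = p := fun z hz => parent_unique ain hz paa
  have bparent : ∀ z, (z, b) ∈ N.arcs → z = p := fun z hz => parent_unique bin' hz pbb
  have pout : N.outDeg p = 2 := by
    rcases hb.classify p pv with hr | hl | ht | hq
    · exact hr.2.2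
    · rw [hl.2.2] at pout2; omega
    · exact ht.2.2
    · rw [hq.2.2] at pout2; omega
  have pchildren : ∀ z, (p, z) ∈ N.arcs → z = a ∨ z = b := two_children pout hab paa pbb
  rcases hcase with ⟨hp0, hv, harcs⟩ | ⟨g, gp, hv, harcs⟩
  · -- root case
    left
    have hVsub : ∀ v ∈ N.verts, v = p ∨ v = a ∨ v = b := by
      by_contra hbad
      push_neg at hbad
      obtain ⟨v₀, hv₀, hv₀p, hv₀a, hv₀b⟩ := hbad
      have hne : (N.verts \ {p, a, b}).Nonempty :=
        ⟨v₀, Finset.mem_sdiff.mpr ⟨hv₀, by simp [hv₀p, hv₀a, hv₀b]⟩⟩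
      obtain ⟨v, hvB, hmin⟩ := exists_min N hb.acyc _ hne
      rw [Finset.mem_sdiff] at hvB
      obtain ⟨hvv, hvne⟩ := hvB
      simp only [Finset.mem_insert, Finset.mem_singleton, not_or] at hvne
      obtain ⟨hvp, hva, hvb⟩ := hvne
      have hvin : N.inDeg v ≠ 0 := by
        intro h0
        obtain ⟨ρ, -, huniq⟩ := hb.root
        exact hvp ((huniq v ⟨hvv, h0⟩).trans (huniq p ⟨pv, hp0⟩).symm)
      obtain ⟨u, hu⟩ := exists_parent hvin
      have huv : u ∈ N.verts := (hb.ends _ hu).1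
      have hup : u ≠ p := by
        intro e
        rcases pchildren v (e ▸ hu) with rfl | rfl
        · exact hva rfl
        · exact hvb rfl
      have hua : u ≠ a := fun e => outDeg_pos (e ▸ hu) aout
      have hub : u ≠ b := fun e => outDeg_pos (e ▸ hu) bout
      exact hmin u (Finset.mem_sdiff.mpr ⟨huv, by simp [hup, hua, hub]⟩)
        (Relation.TransGen.single hu)
    have hV : N.verts = {p, a, b} := by
      ext v
      simp only [Finset.mem_insert, Finset.mem_singleton]
      constructor
      · exact hVsub v
      · rintro (rfl | rfl | rfl)
        · exact pv
        · exact hla.1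
        · exact hlb.1
    have hA : N.arcs = {(p, a), (p, b)} := by
      ext ⟨x, y⟩
      simp only [Finset.mem_insert, Finset.mem_singleton, Prod.mk.injEq]
      constructor
      · intro hxy
        rcases hVsub x (hb.ends _ hxy).1 with rfl | rfl | rfl
        · rcases pchildren y hxy with rfl | rfl
          · exact Or.inl ⟨rfl, rfl⟩
          · exact Or.inr ⟨rfl, rfl⟩
        · exact absurd hxy (no_out_of_leaf aout)
        · exact absurd hxy (no_out_of_leaf bout)
      · rintro (⟨rfl, rfl⟩ | ⟨rfl, rfl⟩)
        · exact paa
        · exact pbb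
    have hMv : M.verts = {b} := by
      rw [hv, hV]
      ext v
      simp only [Finset.mem_sdiff, Finset.mem_insert, Finset.mem_singleton]
      constructor
      · rintro ⟨rfl | rfl | rfl, hne⟩ <;> tauto
      · rintro rfl
        exact ⟨Or.inr (Or.inr rfl), by simp [hab.symm, p_b.symm]⟩
    have hMa : M.arcs = ∅ := by
      rw [harcs, hA, Finset.sdiff_self]
    have htc : N.TreeChild := by
      intro v hvv hout
      rcases hVsub v hvv with rfl | rfl | rfl
      · exact ⟨a, paa, Or.inr hla⟩
      · exact absurd aout hout
      · exact absurd bout hout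
    refine ⟨htc, ⟨by rw [hMv]; simp, hMa⟩, Or.inl ⟨b, rfl, hMv, hMa⟩, ?_, p, hA⟩
    rw [hv]
    exact card_sdiff_pair hla.1 pv (fun e => p_a e.symm)
  · -- inner case
    right
    have p_g : p ≠ g := fun e => hb.noloop _ gp (by simp [e])
    have g_a : g ≠ a := fun e => outDeg_pos (e ▸ gp) aout
    have g_b : g ≠ b := fun e => outDeg_pos (e ▸ gp) bout
    have pin : N.inDeg p = 1 := by
      rcases classify_child hb gp with hl | ht | hq
      · rw [hl.2.2] at pout; omega
      · exact ht.2.1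
      · rw [hq.2.2] at pout; omega
    have pparent : ∀ z, (z, p) ∈ N.arcs → z = g := fun z hz => parent_unique pin hz gp
    have gb_nin : (g, b) ∉ N.arcs := fun hc => p_g (bparent _ hc).symm
    have mem : ∀ u v, ((u, v) ∈ M.arcs ↔ ((u = g ∧ v = b) ∨
        ((u, v) ∈ N.arcs ∧ ¬(u = g ∧ v = p) ∧ ¬(u = p ∧ v = a) ∧ ¬(u = p ∧ v = b)))) := by
      intro u v
      rw [harcs]
      simp only [Finset.mem_insert, Finset.mem_sdiff, Finset.mem_singleton, Prod.mk.injEq, not_or]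
      all_goals tauto
    have mbin : M.inDeg b = 1 := by
      have key : ∀ u, ((u, b) ∈ M.arcs ↔ (u = g ∨ ((u, b) ∈ N.arcs ∧ u ≠ p))) := by
        intro u
        rw [mem u b]
        constructor
        · rintro (⟨rfl, -⟩ | ⟨hN', -, -, h3⟩)
          · exact Or.inl rfl
          · exact Or.inr ⟨hN', fun e => h3 ⟨e, rfl⟩⟩
        · rintro (rfl | ⟨hN', hne⟩)
          · exact Or.inl ⟨rfl, rfl⟩
          · refine Or.inr ⟨hN', ?_, ?_, ?_⟩
            · exact fun ⟨_, e2⟩ => p_b e2.symm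
            · exact fun ⟨e1, _⟩ => hne e1
            · exact fun ⟨e1, _⟩ => hne e1
      rw [inDeg_swap key pbb gb_nin (fun e => p_g e.symm)]
      exact bin'
    have mbout : M.outDeg b = 0 := by
      apply outDeg_eq_zero
      intro w hc
      rcases (mem b w).mp hc with ⟨e, -⟩ | ⟨hc', -⟩
      · exact g_b e.symm
      · exact no_out_of_leaf bout hc'
    have mgb : (g, b) ∈ M.arcs := (mem g b).mpr (Or.inl ⟨rfl, rfl⟩)
    have mgout : M.outDeg g = N.outDeg g := by
      have key : ∀ u, ((g, u) ∈ M.arcs ↔ (u = b ∨ ((g, u) ∈ N.arcs ∧ u ≠ p))) := by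
        intro u
        rw [mem g u]
        constructor
        · rintro (⟨-, rfl⟩ | ⟨hN', h1, -, -⟩)
          · exact Or.inl rfl
          · exact Or.inr ⟨hN', fun e => h1 ⟨rfl, e⟩⟩
        · rintro (rfl | ⟨hN', hne⟩)
          · exact Or.inl ⟨rfl, rfl⟩
          · refine Or.inr ⟨hN', ?_, ?_, ?_⟩
            · exact fun ⟨_, e2⟩ => hne e2
            · exact fun ⟨e1, _⟩ => p_g e1.symm
            · exact fun ⟨e1, _⟩ => p_g e1.symm
      exact outDeg_swap key gp gb_nin (fun e => p_b e.symm)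
    have mgin2 : M.inDeg g = N.inDeg g := by
      apply inDeg_congr
      intro u
      rw [mem u g]
      constructor
      · rintro (⟨-, e⟩ | ⟨hN', -⟩)
        · exact absurd e g_b
        · exact hN'
      · intro hN'
        refine Or.inr ⟨hN', ?_, ?_, ?_⟩
        · exact fun ⟨_, e2⟩ => p_g e2.symm
        · exact fun ⟨_, e2⟩ => g_a e2
        · exact fun ⟨_, e2⟩ => g_b e2
    have mgin : ∀ v, v ≠ a → v ≠ b → v ≠ p → M.inDeg v = N.inDeg v := by
      intro v hva hvb hvp
      apply inDeg_congr
      intro u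
      rw [mem u v]
      constructor
      · rintro (⟨-, e⟩ | ⟨hN', -⟩)
        · exact absurd e hvb
        · exact hN'
      · intro hN'
        refine Or.inr ⟨hN', ?_, ?_, ?_⟩
        · exact fun ⟨_, e2⟩ => hvp e2
        · exact fun ⟨_, e2⟩ => hva e2
        · exact fun ⟨_, e2⟩ => hvb e2
    have mgout' : ∀ v, v ≠ g → v ≠ p → M.outDeg v = N.outDeg v := by
      intro v hvg hvp
      apply outDeg_congr
      intro u
      rw [mem v u]
      constructor
      · rintro (⟨e, -⟩ | ⟨hN', -⟩)
        · exact absurd e hvg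
        · exact hN'
      · intro hN'
        refine Or.inr ⟨hN', ?_, ?_, ?_⟩
        · exact fun ⟨e1, _⟩ => hvg e1
        · exact fun ⟨e1, _⟩ => hvp e1
        · exact fun ⟨e1, _⟩ => hvp e1
    exact ⟨p, g,
      { ab := hab, ain := ain, aout := aout, bin' := bin', bout := bout,
        av := hla.1, bv := hlb.1, paa := paa, pbb := pbb, gp := gp,
        pin := pin, pout := pout, pv := pv, gv := (hb.ends _ gp).1,
        p_a := p_a, p_b := p_b, p_g := p_g, g_a := g_a, g_b := g_b,
        aparent := aparent, bparent := bparent, pchildren := pchildren, pparent := pparent,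
        hv := hv, mem := mem, mbin := mbin, mbout := mbout, mgb := mgb,
        mgout := mgout, mgin2 := mgin2, mgin := mgin, mgout' := mgout',
        mpin := by
          apply inDeg_eq_zero
          intro w hc
          rcases (mem w p).mp hc with ⟨-, e⟩ | ⟨hc', h1, -, -⟩
          · exact p_b e
          · exact h1 ⟨pparent w hc', rfl⟩,
        card2 := hv ▸ card_sdiff_pair hla.1 pv (fun e => p_a e.symm) }⟩

/-- degrees are preserved by a cherry reduction on all surviving vertices -/
lemma cf_degs {N M : DNet} {a b p g : ℕ} (c : CF N M a b p g) :
    ∀ v, v ≠ a → v ≠ p → M.inDeg v = N.inDeg v ∧ M.outDeg v = N.outDeg v := by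
  intro v hva hvp
  constructor
  · by_cases hvb : v = b
    · subst hvb; rw [c.mbin, c.bin']
    · by_cases hvg : v = g
      · subst hvg; exact c.mgin2
      · exact c.mgin v hva hvb hvp
  · by_cases hvg : v = g
    · subst hvg; exact c.mgout
    · exact c.mgout' v hvg hvp

/-- degrees are preserved by a reticulated-cherry reduction on all surviving vertices -/
lemma rf_degs {N M : DNet} {a b pa pb qa qb : ℕ} (c : RF N M a b pa pb qa qb) :
    ∀ v, v ≠ pa → v ≠ pb → M.inDeg v = N.inDeg v ∧ M.outDeg v = N.outDeg v := by
  intro v hvpa hvpb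
  constructor
  · by_cases hva : v = a
    · subst hva; rw [c.main, c.ain]
    · by_cases hvb : v = b
      · subst hvb; rw [c.mbin, c.bin']
      · exact c.mgin v hva hvb hvpa hvpb
  · by_cases hvqa : v = qa
    · subst hvqa; exact c.mqaout
    · by_cases hvqb : v = qb
      · subst hvqb; exact c.mqbout
      · by_cases hva : v = a
        · subst hva; rw [c.maout, c.aout]
        · by_cases hvb : v = b
          · subst hvb; rw [c.mbout, c.bout]
          · exact c.mgout v hvpa hvpb hvqa hvqb

lemma cf_binfacts {N M : DNet} {X : Finset ℕ} {a b p g : ℕ} (hb : BinFacts N X)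
    (c : CF N M a b p g) : BinFacts M (X.erase a) := by
  have hmv : ∀ v, v ∈ M.verts ↔ (v ∈ N.verts ∧ v ≠ a ∧ v ≠ p) := by
    intro v; rw [c.hv]; simp [Finset.mem_sdiff, and_assoc]
  constructor
  · -- ends
    rintro ⟨u, v⟩ huv
    rcases (c.mem u v).mp huv with ⟨rfl, rfl⟩ | ⟨hN', h1, h2, h3⟩
    · exact ⟨(hmv u).mpr ⟨c.gv, c.g_a, fun e => c.p_g e.symm⟩,
        (hmv v).mpr ⟨c.bv, fun e => c.ab e.symm, fun e => c.p_b e.symm⟩⟩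
    · have hu : u ≠ a := fun e => outDeg_pos (e ▸ hN') c.aout
      have hup : u ≠ p := by
        intro e
        subst e
        rcases c.pchildren v hN' with rfl | rfl
        · exact h2 ⟨rfl, rfl⟩
        · exact h3 ⟨rfl, rfl⟩
      have hv' : v ≠ a := fun e => h2 ⟨c.aparent u (e ▸ hN'), e⟩
      have hvp : v ≠ p := fun e => h1 ⟨c.pparent u (e ▸ hN'), e⟩
      exact ⟨(hmv u).mpr ⟨(hb.ends _ hN').1, hu, hup⟩,
        (hmv v).mpr ⟨(hb.ends _ hN').2, hv', hvp⟩⟩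
  · -- no loops
    rintro ⟨u, v⟩ huv
    rcases (c.mem u v).mp huv with ⟨rfl, rfl⟩ | ⟨hN', -⟩
    · exact c.g_b
    · exact hb.noloop _ hN'
  · -- acyclic
    refine acyclic_of N M ?_ hb.acyc
    intro u v huv
    rcases (c.mem u v).mp huv with ⟨rfl, rfl⟩ | ⟨hN', -⟩
    · exact Relation.TransGen.head c.gp (Relation.TransGen.single c.pbb)
    · exact Relation.TransGen.single hN'
  · -- unique root
    obtain ⟨ρ, ⟨hρv, hρ0⟩, huniq⟩ := hb.root
    have hρa : ρ ≠ a := fun e => by rw [e, c.ain] at hρ0; omega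
    have hρp : ρ ≠ p := fun e => by rw [e, c.pin] at hρ0; omega
    refine ⟨ρ, ⟨(hmv ρ).mpr ⟨hρv, hρa, hρp⟩, by rw [(cf_degs c ρ hρa hρp).1]; exact hρ0⟩, ?_⟩
    rintro v ⟨hvm, hv0⟩
    obtain ⟨hvv, hva, hvp⟩ := (hmv v).mp hvm
    exact huniq v ⟨hvv, by rw [← (cf_degs c v hva hvp).1]; exact hv0⟩
  · -- classification
    intro v hvm
    obtain ⟨hvv, hva, hvp⟩ := (hmv v).mp hvm
    obtain ⟨hdi, hdo⟩ := cf_degs c v hva hvp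
    rcases hb.classify v hvv with hr | hl | ht | hq
    · exact Or.inl ⟨hvm, by rw [hdi]; exact hr.2.1, by rw [hdo]; exact hr.2.2⟩
    · exact Or.inr (Or.inl ⟨hvm, by rw [hdi]; exact hl.2.1, by rw [hdo]; exact hl.2.2⟩)
    · exact Or.inr (Or.inr (Or.inl ⟨hvm, by rw [hdi]; exact ht.2.1, by rw [hdo]; exact ht.2.2⟩))
    · exact Or.inr (Or.inr (Or.inr ⟨hvm, by rw [hdi]; exact hq.2.1, by rw [hdo]; exact hq.2.2⟩))
  · -- leaf set
    intro v
    constructor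
    · rintro ⟨hvm, hv1, hv0⟩
      obtain ⟨hvv, hva, hvp⟩ := (hmv v).mp hvm
      obtain ⟨hdi, hdo⟩ := cf_degs c v hva hvp
      refine Finset.mem_erase.mpr ⟨hva, (hb.leafX v).mp ⟨hvv, by rw [← hdi]; exact hv1,
        by rw [← hdo]; exact hv0⟩⟩
    · intro hvX
      obtain ⟨hva, hvX'⟩ := Finset.mem_erase.mp hvX
      obtain ⟨hvv, hv1, hv0⟩ := (hb.leafX v).mpr hvX'
      have hvp : v ≠ p := fun e => by rw [e, c.pout] at hv0; omega
      obtain ⟨hdi, hdo⟩ := cf_degs c v hva hvp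
      exact ⟨(hmv v).mpr ⟨hvv, hva, hvp⟩, by rw [hdi]; exact hv1, by rw [hdo]; exact hv0⟩

lemma rf_binfacts {N M : DNet} {X : Finset ℕ} {a b pa pb qa qb : ℕ} (hb : BinFacts N X)
    (c : RF N M a b pa pb qa qb) : BinFacts M X := by
  have hmv : ∀ v, v ∈ M.verts ↔ (v ∈ N.verts ∧ v ≠ pa ∧ v ≠ pb) := by
    intro v; rw [c.hv]; simp [Finset.mem_sdiff, and_assoc]
  constructor
  · -- ends
    rintro ⟨u, v⟩ huv
    rcases (c.mem u v).mp huv with ⟨rfl, rfl⟩ | ⟨rfl, rfl⟩ | ⟨hN', h1, h2, h3, h4, h5⟩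
    · exact ⟨(hmv u).mpr ⟨(hb.ends _ c.qapa).1, fun e => c.pa_qa e.symm, c.qa_pb⟩,
        (hmv v).mpr ⟨c.av, fun e => c.pa_a e.symm, fun e => c.pb_a e.symm⟩⟩
    · exact ⟨(hmv u).mpr ⟨(hb.ends _ c.qbpb).1, fun e => c.pa_qb e.symm,
          fun e => c.pb_qb e.symm⟩,
        (hmv v).mpr ⟨c.bv, fun e => c.pa_b e.symm, fun e => c.pb_b e.symm⟩⟩
    · have hu : u ≠ pa := fun e => h2 ⟨e, c.pachild v (e ▸ hN')⟩
      have hupb : u ≠ pb := by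
        intro e
        subst e
        rcases c.pbchildren v hN' with rfl | rfl
        · exact h1 ⟨rfl, rfl⟩
        · exact h4 ⟨rfl, rfl⟩
      have hv' : v ≠ pa := by
        intro e
        subst e
        rcases c.paparents u hN' with rfl | rfl
        · exact h1 ⟨rfl, rfl⟩
        · exact h3 ⟨rfl, rfl⟩
      have hvpb : v ≠ pb := fun e => h5 ⟨c.pbparent u (e ▸ hN'), e⟩
      exact ⟨(hmv u).mpr ⟨(hb.ends _ hN').1, hu, hupb⟩,
        (hmv v).mpr ⟨(hb.ends _ hN').2, hv', hvpb⟩⟩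
  · -- no loops
    rintro ⟨u, v⟩ huv
    rcases (c.mem u v).mp huv with ⟨rfl, rfl⟩ | ⟨rfl, rfl⟩ | ⟨hN', -⟩
    · exact c.qa_a
    · exact c.qb_b
    · exact hb.noloop _ hN'
  · -- acyclic
    refine acyclic_of N M ?_ hb.acyc
    intro u v huv
    rcases (c.mem u v).mp huv with ⟨rfl, rfl⟩ | ⟨rfl, rfl⟩ | ⟨hN', -⟩
    · exact Relation.TransGen.head c.qapa (Relation.TransGen.single c.paa)
    · exact Relation.TransGen.head c.qbpb (Relation.TransGen.single c.pbb)
    · exact Relation.TransGen.single hN'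
  · -- unique root
    obtain ⟨ρ, ⟨hρv, hρ0⟩, huniq⟩ := hb.root
    have hρpa : ρ ≠ pa := fun e => by rw [e, c.pain] at hρ0; omega
    have hρpb : ρ ≠ pb := fun e => by rw [e, c.pbin] at hρ0; omega
    refine ⟨ρ, ⟨(hmv ρ).mpr ⟨hρv, hρpa, hρpb⟩, by rw [(rf_degs c ρ hρpa hρpb).1]; exact hρ0⟩, ?_⟩
    rintro v ⟨hvm, hv0⟩
    obtain ⟨hvv, hvpa, hvpb⟩ := (hmv v).mp hvm
    exact huniq v ⟨hvv, by rw [← (rf_degs c v hvpa hvpb).1]; exact hv0⟩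
  · -- classification
    intro v hvm
    obtain ⟨hvv, hvpa, hvpb⟩ := (hmv v).mp hvm
    obtain ⟨hdi, hdo⟩ := rf_degs c v hvpa hvpb
    rcases hb.classify v hvv with hr | hl | ht | hq
    · exact Or.inl ⟨hvm, by rw [hdi]; exact hr.2.1, by rw [hdo]; exact hr.2.2⟩
    · exact Or.inr (Or.inl ⟨hvm, by rw [hdi]; exact hl.2.1, by rw [hdo]; exact hl.2.2⟩)
    · exact Or.inr (Or.inr (Or.inl ⟨hvm, by rw [hdi]; exact ht.2.1, by rw [hdo]; exact ht.2.2⟩))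
    · exact Or.inr (Or.inr (Or.inr ⟨hvm, by rw [hdi]; exact hq.2.1, by rw [hdo]; exact hq.2.2⟩))
  · -- leaf set
    intro v
    constructor
    · rintro ⟨hvm, hv1, hv0⟩
      obtain ⟨hvv, hvpa, hvpb⟩ := (hmv v).mp hvm
      obtain ⟨hdi, hdo⟩ := rf_degs c v hvpa hvpb
      exact (hb.leafX v).mp ⟨hvv, by rw [← hdi]; exact hv1, by rw [← hdo]; exact hv0⟩
    · intro hvX
      obtain ⟨hvv, hv1, hv0⟩ := (hb.leafX v).mpr hvX
      have hvpa : v ≠ pa := fun e => by rw [e, c.pain] at hv1; omega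
      have hvpb : v ≠ pb := fun e => by rw [e, c.pbout] at hv0; omega
      obtain ⟨hdi, hdo⟩ := rf_degs c v hvpa hvpb
      exact ⟨(hmv v).mpr ⟨hvv, hvpa, hvpb⟩, by rw [hdi]; exact hv1, by rw [hdo]; exact hv0⟩

lemma binfacts_bin {M : DNet} {X : Finset ℕ} (h : BinFacts M X) : IsRootedBinaryNet M X :=
  Or.inr ⟨h.ends, h.noloop, h.acyc, h.root, h.classify, h.leafX⟩

lemma tc_no_stack {N : DNet} (h : N.TreeChild) : ¬ N.HasStack := by
  rintro ⟨u, v, hu, hv, huv⟩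
  obtain ⟨c, hc, hcl⟩ := h u hu.1 (by rw [hu.2.2]; omega)
  have hcv : c = v := child_unique hu.2.2 hc huv
  subst hcv
  rcases hcl with ht | hl
  · have h1 := ht.2.2; have h2 := hv.2.2; omega
  · have h1 := hl.2.1; have h2 := hv.2.1; omega

lemma tc_no_sib {N X : _} (hb : BinFacts N X) (h : N.TreeChild) : ¬ N.HasSiblingRets := by
  rintro ⟨p, u, v, huv, hu, hv, hpu, hpv⟩
  have hpverts : p ∈ N.verts := (hb.ends _ hpu).1
  have hpout : N.outDeg p = 2 := by
    rcases hb.classify p hpverts with hr | hl | ht | hq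
    · exact hr.2.2
    · exact absurd hpu (no_out_of_leaf hl.2.2)
    · exact ht.2.2
    · exact absurd (child_unique hq.2.2 hpu hpv) huv
  obtain ⟨c, hc, hcl⟩ := h p hpverts (by rw [hpout]; omega)
  have : c = u ∨ c = v := two_children hpout huv hpu hpv c hc
  rcases this with rfl | rfl
  · rcases hcl with ht | hl
    · have h1 := ht.2.1; have h2 := hu.2.1; omega
    · have h1 := hl.2.2; have h2 := hu.2.2; omega
  · rcases hcl with ht | hl
    · have h1 := ht.2.1; have h2 := hv.2.1; omega
    · have h1 := hl.2.2; have h2 := hv.2.2; omega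

lemma tc_of {N X : _} (hb : BinFacts N X) (hst : ¬ N.HasStack) (hsib : ¬ N.HasSiblingRets) :
    N.TreeChild := by
  intro v hvv hout
  rcases hb.classify v hvv with hr | hl | ht | hq
  case inr.inl => exact absurd hl.2.2 hout
  case inr.inr.inr =>
    obtain ⟨c, hc⟩ := exists_child (by rw [hq.2.2]; omega)
    refine ⟨c, hc, ?_⟩
    rcases classify_child hb hc with h1 | h2 | h3
    · exact Or.inr h1
    · exact Or.inl h2
    · exact absurd ⟨v, c, hq, h3, hc⟩ hst
  all_goals {
    have hout2 : N.outDeg v = 2 := by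
      first
      | exact hr.2.2
      | exact ht.2.2
    obtain ⟨c₁, c₂, hne, hc₁, hc₂⟩ := exists_two_children hout2
    rcases classify_child hb hc₁ with h1 | h2 | h3
    · exact ⟨c₁, hc₁, Or.inr h1⟩
    · exact ⟨c₁, hc₁, Or.inl h2⟩
    · rcases classify_child hb hc₂ with g1 | g2 | g3
      · exact ⟨c₂, hc₂, Or.inr g1⟩
      · exact ⟨c₂, hc₂, Or.inl g2⟩
      · exact absurd ⟨v, c₁, c₂, hne, h3, g3, hc₁, hc₂⟩ hsib
  }

lemma cf_tc {N M : DNet} {X : Finset ℕ} {a b p g : ℕ} (hb : BinFacts N X)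
    (c : CF N M a b p g) (htc : N.TreeChild) : M.TreeChild := by
  intro v hvm hout
  have hmv : v ∈ N.verts ∧ v ≠ a ∧ v ≠ p := by
    rw [c.hv] at hvm
    simp only [Finset.mem_sdiff, Finset.mem_insert, Finset.mem_singleton, not_or] at hvm
    exact ⟨hvm.1, hvm.2.1, hvm.2.2⟩
  obtain ⟨hvv, hva, hvp⟩ := hmv
  by_cases hvg : v = g
  · subst hvg
    refine ⟨b, c.mgb, Or.inr ⟨?_, c.mbin, c.mbout⟩⟩
    rw [c.hv]
    simp only [Finset.mem_sdiff, Finset.mem_insert, Finset.mem_singleton, not_or]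
    exact ⟨c.bv, fun e => c.ab e.symm, fun e => c.p_b e.symm⟩
  · have houtN : N.outDeg v ≠ 0 := by rw [← (cf_degs c v hva hvp).2]; exact hout
    obtain ⟨w, hw, hwl⟩ := htc v hvv houtN
    have hwa : w ≠ a := fun e => hvp (c.aparent v (e ▸ hw))
    have hwp : w ≠ p := fun e => hvg (c.pparent v (e ▸ hw))
    have hwm : (v, w) ∈ M.arcs := by
      refine (c.mem v w).mpr (Or.inr ⟨hw, ?_, ?_, ?_⟩)
      · exact fun ⟨e1, _⟩ => hvg e1
      · exact fun ⟨e1, _⟩ => hvp e1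
      · exact fun ⟨e1, _⟩ => hvp e1
    have hwverts : w ∈ M.verts := by
      rw [c.hv]
      simp only [Finset.mem_sdiff, Finset.mem_insert, Finset.mem_singleton, not_or]
      exact ⟨(hb.ends _ hw).2, hwa, hwp⟩
    obtain ⟨hdi, hdo⟩ := cf_degs c w hwa hwp
    refine ⟨w, hwm, ?_⟩
    rcases hwl with ht | hl
    · exact Or.inl ⟨hwverts, by rw [hdi]; exact ht.2.1, by rw [hdo]; exact ht.2.2⟩
    · exact Or.inr ⟨hwverts, by rw [hdi]; exact hl.2.1, by rw [hdo]; exact hl.2.2⟩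

lemma rf_tc {N M : DNet} {X : Finset ℕ} {a b pa pb qa qb : ℕ} (hb : BinFacts N X)
    (c : RF N M a b pa pb qa qb) (htc : N.TreeChild) : M.TreeChild := by
  have hav : a ∈ M.verts := by
    rw [c.hv]
    simp only [Finset.mem_sdiff, Finset.mem_insert, Finset.mem_singleton, not_or]
    exact ⟨c.av, fun e => c.pa_a e.symm, fun e => c.pb_a e.symm⟩
  have hbv : b ∈ M.verts := by
    rw [c.hv]
    simp only [Finset.mem_sdiff, Finset.mem_insert, Finset.mem_singleton, not_or]
    exact ⟨c.bv, fun e => c.pa_b e.symm, fun e => c.pb_b e.symm⟩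
  intro v hvm hout
  have hmv : v ∈ N.verts ∧ v ≠ pa ∧ v ≠ pb := by
    rw [c.hv] at hvm
    simp only [Finset.mem_sdiff, Finset.mem_insert, Finset.mem_singleton, not_or] at hvm
    exact ⟨hvm.1, hvm.2.1, hvm.2.2⟩
  obtain ⟨hvv, hvpa, hvpb⟩ := hmv
  by_cases hvqa : v = qa
  · subst hvqa
    exact ⟨a, c.mqaa, Or.inr ⟨hav, c.main, c.maout⟩⟩
  · by_cases hvqb : v = qb
    · subst hvqb
      exact ⟨b, c.mqbb, Or.inr ⟨hbv, c.mbin, c.mbout⟩⟩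
    · have houtN : N.outDeg v ≠ 0 := by rw [← (rf_degs c v hvpa hvpb).2]; exact hout
      obtain ⟨w, hw, hwl⟩ := htc v hvv houtN
      have hwpa : w ≠ pa := by
        intro e
        subst e
        rcases hwl with ht | hl
        · have h1 := ht.2.1; have h2 := c.pain; omega
        · have h1 := hl.2.2; have h2 := c.paout; omega
      have hwpb : w ≠ pb := fun e => hvqb (c.pbparent v (e ▸ hw))
      have hwm : (v, w) ∈ M.arcs := by
        refine (c.mem v w).mpr (Or.inr (Or.inr ⟨hw, ?_, ?_, ?_, ?_, ?_⟩))
        · exact fun ⟨e1, _⟩ => hvpb e1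
        · exact fun ⟨e1, _⟩ => hvpa e1
        · exact fun ⟨e1, _⟩ => hvqa e1
        · exact fun ⟨e1, _⟩ => hvpb e1
        · exact fun ⟨e1, _⟩ => hvqb e1
      have hwverts : w ∈ M.verts := by
        rw [c.hv]
        simp only [Finset.mem_sdiff, Finset.mem_insert, Finset.mem_singleton, not_or]
        exact ⟨(hb.ends _ hw).2, hwpa, hwpb⟩
      obtain ⟨hdi, hdo⟩ := rf_degs c w hwpa hwpb
      refine ⟨w, hwm, ?_⟩
      rcases hwl with ht | hl
      · exact Or.inl ⟨hwverts, by rw [hdi]; exact ht.2.1, by rw [hdo]; exact ht.2.2⟩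
      · exact Or.inr ⟨hwverts, by rw [hdi]; exact hl.2.1, by rw [hdo]; exact hl.2.2⟩

/-- every non-degenerate tree-child binary network admits a cherry or
reticulated-cherry reduction -/
lemma exists_step {N : DNet} {X : Finset ℕ} (hb : BinFacts N X) (htc : N.TreeChild) :
    ∃ M r, RStep N M r := by
  classical
  obtain ⟨ρ, ⟨hρv, hρ0⟩, hρuniq⟩ := hb.root
  have hρroot : N.IsRoot ρ := by
    rcases hb.classify ρ hρv with hr | hl | ht | hq
    · exact hr
    · rw [hl.2.1] at hρ0; omega
    · rw [ht.2.1] at hρ0; omega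
    · rw [hq.2.1] at hρ0; omega
  set S' := (N.verts.filter (fun v => N.outDeg v = 2)).erase ρ with hS'
  -- a vertex of S' is a tree vertex
  have hS'tree : ∀ v ∈ S', N.IsTreeVertex v := by
    intro v hv
    obtain ⟨hvρ, hvf⟩ := Finset.mem_erase.mp hv
    obtain ⟨hvv, hvout⟩ := Finset.mem_filter.mp hvf
    rcases hb.classify v hvv with hr | hl | ht | hq
    · exact absurd (hρuniq v ⟨hvv, hr.2.1⟩) hvρ
    · rw [hl.2.2] at hvout; omega
    · exact ht
    · rw [hq.2.2] at hvout; omega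
  -- no reticulation has ρ as both parents, so if there are no tree vertices
  -- then there are no reticulations
  by_cases hS'ne : S'.Nonempty
  · -- take a maximal tree vertex
    obtain ⟨v, hvS', hvmax⟩ := exists_max N hb.acyc S' hS'ne
    have hvtree := hS'tree v hvS'
    obtain ⟨hvv, hvin, hvout⟩ := hvtree
    obtain ⟨g, hg⟩ := exists_parent (show N.inDeg v ≠ 0 by omega)
    obtain ⟨c₁, c₂, hc12, hc₁, hc₂⟩ := exists_two_children hvout
    -- each child of v is a leaf or a reticulation
    have hchild : ∀ c, (v, c) ∈ N.arcs → N.IsLeaf c ∨ N.IsRet c := by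
      intro c hc
      rcases classify_child hb hc with hl | ht | hq
      · exact Or.inl hl
      · exfalso
        refine hvmax c (Finset.mem_erase.mpr ⟨?_, Finset.mem_filter.mpr ⟨ht.1, ht.2.2⟩⟩)
          (Relation.TransGen.single hc)
        intro e
        have h1 := ht.2.1
        rw [e] at h1
        omega
      · exact Or.inr hq
    -- the tree-child witness child of v is a leaf
    obtain ⟨c, hc, hcl⟩ := htc v hvv (by omega)
    have hcleaf : N.IsLeaf c := by
      rcases hcl with ht | hl
      · rcases hchild c hc with h1 | h2
        · exact h1
        · exfalso; have h1 := ht.2.1; have h2 := h2.2.1; omega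
      · exact hl
    -- wlog c = c₂
    have hkey : ∀ d₁ d₂, d₁ ≠ d₂ → (v, d₁) ∈ N.arcs → (v, d₂) ∈ N.arcs → N.IsLeaf d₂ →
        ∃ M r, RStep N M r := by
      intro d₁ d₂ hd12 hd₁ hd₂ hd₂leaf
      rcases hchild d₁ hd₁ with hd₁leaf | hd₁ret
      · -- cherry [d₁, d₂]
        refine ⟨⟨N.verts \ {d₁, v}, insert (g, d₂) (N.arcs \ {(g, v), (v, d₁), (v, d₂)})⟩,
          .cherry d₁ d₂, ⟨hd12, hd₁leaf, hd₂leaf, v, hd₁, hd₂⟩, v, hd₁, hd₂,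
          Or.inr ⟨g, hg, rfl, rfl⟩⟩
      · -- reticulated cherry
        obtain ⟨w, hw⟩ := exists_child (by rw [hd₁ret.2.2]; omega)
        have hwleaf : N.IsLeaf w := by
          rcases classify_child hb hw with hl | ht | hq
          · exact hl
          · exfalso
            refine hvmax w (Finset.mem_erase.mpr ⟨?_, Finset.mem_filter.mpr ⟨ht.1, ht.2.2⟩⟩)
              ((Relation.TransGen.single hd₁).tail hw)
            intro e
            have h1 := ht.2.1
            rw [e] at h1
            omega
          · exact absurd ⟨d₁, w, hd₁ret, hq, hw⟩ (tc_no_stack htc)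
        have hd₁v : d₁ ≠ v := fun e => by
          have h1 := hd₁ret.2.2; rw [e] at h1; omega
        have hwd₂ : w ≠ d₂ := by
          intro e
          subst e
          exact hd₁v (parent_unique hwleaf.2.1 hw hd₂)
        obtain ⟨u₁, u₂, hu12, hu₁, hu₂⟩ := exists_two_parents hd₁ret.2.1
        have hqa : ∃ qa, qa ≠ v ∧ (qa, d₁) ∈ N.arcs := by
          by_cases h1 : u₁ = v
          · exact ⟨u₂, fun e => hu12 (h1.trans e.symm), hu₂⟩
          · exact ⟨u₁, h1, hu₁⟩
        obtain ⟨qa, hqav, hqa⟩ := hqa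
        exact ⟨⟨N.verts \ {d₁, v},
            insert (qa, w) (insert (g, d₂)
              (N.arcs \ {(v, d₁), (d₁, w), (qa, d₁), (v, d₂), (g, v)}))⟩,
          .ret w d₂,
          ⟨hwd₂, hwleaf, hd₂leaf, d₁, v, hw, hd₂, hd₁ret, hd₁⟩,
          d₁, v, qa, g, hw, hd₂, hd₁ret, hd₁, hqa, hqav, hg, rfl, rfl⟩
    rcases two_children hvout hc12 hc₁ hc₂ c hc with rfl | rfl
    · exact hkey c₂ c (Ne.symm hc12) hc₂ hc hcleaf
    · exact hkey c₁ c hc12 hc₁ hc hcleaf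
  · -- no tree vertices: the two children of the root are leaves
    obtain ⟨c₁, c₂, hc12, hc₁, hc₂⟩ := exists_two_children hρroot.2.2
    have hchild : ∀ c, (ρ, c) ∈ N.arcs → N.IsLeaf c := by
      intro c hc
      rcases classify_child hb hc with hl | ht | hq
      · exact hl
      · exfalso
        refine hS'ne ⟨c, Finset.mem_erase.mpr ⟨?_, Finset.mem_filter.mpr ⟨ht.1, ht.2.2⟩⟩⟩
        intro e
        have h1 := ht.2.1
        rw [e] at h1
        omega
      · exfalso
        obtain ⟨u₁, u₂, hu12, hu₁, hu₂⟩ := exists_two_parents hq.2.1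
        have hpar : ∀ u, (u, c) ∈ N.arcs → u = ρ := by
          intro u hu
          rcases hb.classify u (hb.ends _ hu).1 with hr | hl' | ht' | hq'
          · exact hρuniq u ⟨hr.1, hr.2.1⟩
          · exact absurd hu (no_out_of_leaf hl'.2.2)
          · exfalso
            refine hS'ne ⟨u, Finset.mem_erase.mpr ⟨?_, Finset.mem_filter.mpr ⟨ht'.1, ht'.2.2⟩⟩⟩
            intro e
            have h1 := ht'.2.1
            rw [e] at h1
            omega
          · exact absurd ⟨u, c, hq', hq, hu⟩ (tc_no_stack htc)
        exact hu12 ((hpar u₁ hu₁).trans (hpar u₂ hu₂).symm)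
    exact ⟨⟨N.verts \ {c₁, ρ}, N.arcs \ {(ρ, c₁), (ρ, c₂)}⟩, .cherry c₁ c₂,
      ⟨hc12, hchild c₁ hc₁, hchild c₂ hc₂, ρ, hc₁, hc₂⟩, ρ, hc₁, hc₂,
      Or.inl ⟨hρ0, rfl, rfl⟩⟩

/-- the pending-leaf invariant: `x` is a leaf whose (tree-vertex) parent `q` has no
reticulation children -/
def Pend (N : DNet) (x q : ℕ) : Prop :=
  (q, x) ∈ N.arcs ∧ N.IsLeaf x ∧ N.outDeg q = 2 ∧ ∀ c, (q, c) ∈ N.arcs → N.inDeg c ≠ 2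

lemma pend_start {N M : DNet} {X : Finset ℕ} {a b pa pb qa qb : ℕ} (hb : BinFacts N X)
    (htc : N.TreeChild) (c : RF N M a b pa pb qa qb) : Pend M a qa := by
  have hqa_out : N.outDeg qa = 2 := by
    rcases hb.classify qa (hb.ends _ c.qapa).1 with hr | hl | ht | hq
    · exact hr.2.2
    · exact absurd c.qapa (no_out_of_leaf hl.2.2)
    · exact ht.2.2
    · exact absurd ⟨qa, pa, hq, ⟨c.pav, c.pain, c.paout⟩, c.qapa⟩ (tc_no_stack htc)
  refine ⟨c.mqaa, ⟨?_, c.main, c.maout⟩, by rw [c.mqaout]; exact hqa_out, ?_⟩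
  · rw [c.hv]
    simp only [Finset.mem_sdiff, Finset.mem_insert, Finset.mem_singleton, not_or]
    exact ⟨c.av, fun e => c.pa_a e.symm, fun e => c.pb_a e.symm⟩
  · intro ch hch
    rcases (c.mem qa ch).mp hch with ⟨-, rfl⟩ | ⟨hq, rfl⟩ | ⟨hN', -, -, h3, -, -⟩
    · rw [c.main]; omega
    · rw [c.mbin]; omega
    · have hchpa : ch ≠ pa := fun e => h3 ⟨rfl, e⟩
      have hcha : ch ≠ a := fun e => c.pa_qa (c.aparent qa (e ▸ hN')).symm
      have hchb : ch ≠ b := fun e => c.qa_pb (c.bparent qa (e ▸ hN'))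
      by_cases hchpb : ch = pb
      · rw [hchpb, c.mpbin]; omega
      · rw [c.mgin ch hcha hchb hchpa hchpb]
        intro h2
        have hchret : N.IsRet ch := by
          rcases classify_child hb hN' with hl | ht | hq
          · rw [hl.2.1] at h2; omega
          · rw [ht.2.1] at h2; omega
          · exact hq
        exact tc_no_sib hb htc ⟨qa, pa, ch, fun e => hchpa e.symm,
          ⟨c.pav, c.pain, c.paout⟩, hchret, c.qapa, hN'⟩

lemma pend_preserve {N M : DNet} {X : Finset ℕ} {x q : ℕ} {r : Pick} (hb : BinFacts N X)
    (hp : Pend N x q) (hstep : RStep N M r) (hnc : ¬ r.Contains x) : Pend M x q := by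
  obtain ⟨hqx, hxl, hqout, hch⟩ := hp
  have hx_in : N.inDeg x = 1 := hxl.2.1
  have hx_out : N.outDeg x = 0 := hxl.2.2
  cases r with
  | cherry a b =>
    simp only [Pick.Contains, Pick.fst, Pick.snd, not_or] at hnc
    obtain ⟨hax, hbx⟩ := hnc
    rcases cf_of hb hstep with ⟨-, -, -, -, p, hA⟩ | ⟨p, g, c⟩
    · exfalso
      rw [hA] at hqx
      simp only [Finset.mem_insert, Finset.mem_singleton, Prod.mk.injEq] at hqx
      rcases hqx with ⟨-, e⟩ | ⟨-, e⟩
      · exact hax e.symm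
      · exact hbx e.symm
    · have hxp : x ≠ p := fun e => by rw [e, c.pout] at hx_out; omega
      have hqp : q ≠ p := by
        intro e
        subst e
        rcases c.pchildren x hqx with rfl | rfl
        · exact hax rfl
        · exact hbx rfl
      have hqxM : (q, x) ∈ M.arcs := by
        refine (c.mem q x).mpr (Or.inr ⟨hqx, ?_, ?_, ?_⟩)
        · exact fun ⟨_, e2⟩ => hxp e2
        · exact fun ⟨e1, _⟩ => hqp e1
        · exact fun ⟨e1, _⟩ => hqp e1
      have hxa : x ≠ a := fun e => hax e.symm
      have hxverts : x ∈ M.verts := by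
        rw [c.hv]
        simp only [Finset.mem_sdiff, Finset.mem_insert, Finset.mem_singleton, not_or]
        exact ⟨hxl.1, hxa, hxp⟩
      obtain ⟨hdi, hdo⟩ := cf_degs c x hxa hxp
      have hqoutM : M.outDeg q = N.outDeg q := by
        by_cases hqg : q = g
        · subst hqg; exact c.mgout
        · exact c.mgout' q hqg hqp
      refine ⟨hqxM, ⟨hxverts, by rw [hdi]; exact hx_in, by rw [hdo]; exact hx_out⟩,
        by rw [hqoutM]; exact hqout, ?_⟩
      intro ch hchM
      rcases (c.mem q ch).mp hchM with ⟨-, rfl⟩ | ⟨hN', -⟩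
      · rw [c.mbin]; omega
      · by_cases hcha : ch = a
        · exact absurd (c.aparent q (hcha ▸ hN')) hqp
        · by_cases hchb : ch = b
          · rw [hchb, c.mbin]; omega
          · by_cases hchp : ch = p
            · rw [hchp, c.mpin]; omega
            · rw [c.mgin ch hcha hchb hchp]; exact hch ch hN'
  | ret a b =>
    simp only [Pick.Contains, Pick.fst, Pick.snd, not_or] at hnc
    obtain ⟨hax, hbx⟩ := hnc
    have hxa : x ≠ a := fun e => hax e.symm
    have hxb : x ≠ b := fun e => hbx e.symm
    obtain ⟨pa, pb, qa, qb, c⟩ := rf_of hb hstep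
    have hxpa : x ≠ pa := fun e => by have h1 := c.paout; rw [e] at hx_out; omega
    have hxpb : x ≠ pb := fun e => by have h1 := c.pbout; rw [e] at hx_out; omega
    have hqpa : q ≠ pa := fun e => by have h1 := c.paout; rw [e] at hqout; omega
    have hqpb : q ≠ pb := fun e => hch pa (by rw [e]; exact c.pbpa) c.pain
    have hqqa : q ≠ qa := fun e => hch pa (by rw [e]; exact c.qapa) c.pain
    have hqxM : (q, x) ∈ M.arcs := by
      refine (c.mem q x).mpr (Or.inr (Or.inr ⟨hqx, ?_, ?_, ?_, ?_, ?_⟩))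
      · exact fun ⟨e1, _⟩ => hqpb e1
      · exact fun ⟨e1, _⟩ => hqpa e1
      · exact fun ⟨e1, _⟩ => hqqa e1
      · exact fun ⟨e1, _⟩ => hqpb e1
      · exact fun ⟨_, e2⟩ => hxpb e2
    have hxverts : x ∈ M.verts := by
      rw [c.hv]
      simp only [Finset.mem_sdiff, Finset.mem_insert, Finset.mem_singleton, not_or]
      exact ⟨hxl.1, hxpa, hxpb⟩
    obtain ⟨hdi, hdo⟩ := rf_degs c x hxpa hxpb
    have hqoutM : M.outDeg q = N.outDeg q := by
      by_cases hqqb : q = qb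
      · subst hqqb; exact c.mqbout
      · exact c.mgout q hqpa hqpb hqqa hqqb
    refine ⟨hqxM, ⟨hxverts, by rw [hdi]; exact hx_in, by rw [hdo]; exact hx_out⟩,
      by rw [hqoutM]; exact hqout, ?_⟩
    intro ch hchM
    rcases (c.mem q ch).mp hchM with ⟨e, -⟩ | ⟨-, rfl⟩ | ⟨hN', -⟩
    · exact absurd e hqqa
    · rw [c.mbin]; omega
    · by_cases hcha : ch = a
      · exact absurd (c.aparent q (hcha ▸ hN')) hqpa
      · by_cases hchb : ch = b
        · exact absurd (c.bparent q (hchb ▸ hN')) hqpb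
        · by_cases hchpa : ch = pa
          · exact absurd c.pain (hch pa (hchpa ▸ hN'))
          · by_cases hchpb : ch = pb
            · rw [hchpb, c.mpbin]; omega
            · rw [c.mgin ch hcha hchb hchpa hchpb]; exact hch ch hN'

lemma pend_stop {N M : DNet} {X : Finset ℕ} {x q : ℕ} {r : Pick} (hb : BinFacts N X)
    (hp : Pend N x q) (hstep : RStep N M r) (hc : r.Contains x) : r.IsCherryPair := by
  obtain ⟨hqx, hxl, hqout, hch⟩ := hp
  cases r with
  | cherry a b => trivial
  | ret a b =>
    exfalso
    simp only [Pick.Contains, Pick.fst, Pick.snd] at hc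
    obtain ⟨pa, pb, qa, qb, c⟩ := rf_of hb hstep
    rcases hc with e | e
    · subst e
      have he : q = pa := c.aparent q hqx
      have h1 := c.paout
      rw [he] at hqout
      omega
    · subst e
      have he : q = pb := c.bparent q hqx
      exact hch pa (by rw [he]; exact c.pbpa) c.pain

lemma pend_chain {Ns : ℕ → DNet} {rs : ℕ → Pick} {k : ℕ} (hseq : RCherrySeq Ns rs k)
    (hG : ∀ i < k, ∃ X', BinFacts (Ns i) X' ∧ (Ns i).TreeChild)
    {x q i : ℕ} (hp : Pend (Ns (i + 1)) x q) :
    ∀ j, i < j → j ≤ k → (∀ l, i < l → l < j → ¬ (rs l).Contains x) → Pend (Ns j) x q := by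
  have key : ∀ d, i + 1 + d ≤ k → (∀ l, i < l → l < i + 1 + d → ¬ (rs l).Contains x) →
      Pend (Ns (i + 1 + d)) x q := by
    intro d
    induction d with
    | zero => intro _ _; exact hp
    | succ d ih =>
      intro hdk hmin
      have hprev := ih (by omega) (fun l h1 h2 => hmin l h1 (by omega))
      have hstep := hseq (i + 1 + d) (by omega)
      obtain ⟨X', hbf, -⟩ := hG (i + 1 + d) (by omega)
      have he : i + 1 + (d + 1) = (i + 1 + d) + 1 := by omega
      rw [he]
      exact pend_preserve hbf hprev hstep (hmin (i + 1 + d) (by omega) (by omega))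
  intro j hij hjk hmin
  have he : j = i + 1 + (j - i - 1) := by omega
  rw [he] at hjk hmin ⊢
  exact key _ hjk hmin

lemma seq_tc {Ns : ℕ → DNet} {rs : ℕ → Pick} {k : ℕ} (hseq : RCherrySeq Ns rs k)
    (hG : ∀ i < k, ∃ X', BinFacts (Ns i) X' ∧ (Ns i).TreeChild) : TreeChildSeq rs k := by
  have hP1 : SeqP1 rs k := by
    intro i j hret hsucc
    obtain ⟨hij, hjk, hcont, hmin⟩ := hsucc
    cases hri : rs i with
    | cherry u v => rw [hri] at hret; simp only [Pick.IsRetPair] at hret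
    | ret u v =>
      have hik : i < k := lt_trans hij hjk
      have hstep := hseq i hik
      rw [hri] at hstep
      obtain ⟨X', hbf, htc⟩ := hG i hik
      obtain ⟨pa, pb, qa, qb, c⟩ := rf_of hbf hstep
      have hp0 : Pend (Ns (i + 1)) u qa := pend_start hbf htc c
      rw [hri] at hcont hmin
      simp only [Pick.fst] at hcont hmin
      have hp : Pend (Ns j) u qa := pend_chain hseq hG hp0 j hij (le_of_lt hjk) hmin
      obtain ⟨Xj, hbfj, -⟩ := hG j hjk
      exact pend_stop hbfj hp (hseq j hjk) hcont
  refine ⟨hP1, ?_⟩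
  have hP2core : ∀ i i' j, i < i' → (rs i).IsRetPair → (rs i').IsRetPair →
      SuccAt rs k i j → SuccAt rs k i' j → False := by
    intro i i' j hii' hret hret' hs hs'
    have hcj : (rs j).IsCherryPair := hP1 i j hret hs
    obtain ⟨hij, hjk, hcont, hmin⟩ := hs
    obtain ⟨hi'j, -, hcont', hmin'⟩ := hs'
    cases hri : rs i with
    | cherry u v => rw [hri] at hret; simp only [Pick.IsRetPair] at hret
    | ret x y =>
    cases hri' : rs i' with
    | cherry u v => rw [hri'] at hret'; simp only [Pick.IsRetPair] at hret'
    | ret x' y' =>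
      rw [hri] at hcont hmin
      rw [hri'] at hcont' hmin'
      simp only [Pick.fst] at hcont hmin hcont' hmin'
      have hik : i < k := by omega
      have hi'k : i' < k := by omega
      obtain ⟨Xi, hbfi, htci⟩ := hG i hik
      obtain ⟨Xi', hbfi', htci'⟩ := hG i' hi'k
      have hstepi := hseq i hik
      rw [hri] at hstepi
      have hstepi' := hseq i' hi'k
      rw [hri'] at hstepi'
      obtain ⟨pa, pb, qa, qb, c⟩ := rf_of hbfi hstepi
      obtain ⟨pa', pb', qa', qb', c'⟩ := rf_of hbfi' hstepi'
      have hxx' : x' ≠ x := by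
        have := hmin i' hii' hi'j
        rw [hri'] at this
        simp only [Pick.Contains, Pick.fst, Pick.snd, not_or] at this
        exact this.1
      have hpx0 : Pend (Ns (i + 1)) x qa := pend_start hbfi htci c
      have hpx'0 : Pend (Ns (i' + 1)) x' qa' := pend_start hbfi' htci' c'
      have hpxi' : Pend (Ns i') x qa :=
        pend_chain hseq hG hpx0 i' hii' (by omega) (fun l h1 h2 => hmin l h1 (by omega))
      have hpxj : Pend (Ns j) x qa := pend_chain hseq hG hpx0 j hij (by omega) hmin
      have hpx'j : Pend (Ns j) x' qa' := pend_chain hseq hG hpx'0 j hi'j (by omega) hmin'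
      cases hrj : rs j with
      | ret u v => rw [hrj] at hcj; simp only [Pick.IsCherryPair] at hcj
      | cherry cc dd =>
        have hstepj := hseq j hjk
        rw [hrj] at hstepj
        obtain ⟨⟨hcd, -, -, p, hpc, hpd⟩, -⟩ := hstepj
        rw [hrj] at hcont hcont'
        simp only [Pick.Contains, Pick.fst, Pick.snd] at hcont hcont'
        have hpx : (p, x) ∈ (Ns j).arcs := by
          rcases hcont with rfl | rfl
          · exact hpc
          · exact hpd
        have hpx' : (p, x') ∈ (Ns j).arcs := by
          rcases hcont' with rfl | rfl
          · exact hpc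
          · exact hpd
        have hq1 : qa = p := parent_unique hpxj.2.1.2.1 hpxj.1 hpx
        have hq2 : qa' = p := parent_unique hpx'j.2.1.2.1 hpx'j.1 hpx'
        refine hpxi'.2.2.2 pa' ?_ c'.pain
        rw [hq1, ← hq2]
        exact c'.qapa
  intro i i' j hne h1 h2 hs hs'
  rcases Nat.lt_or_ge i i' with h | h
  · exact hP2core i i' j h h1 h2 hs hs'
  · rcases Nat.lt_or_ge i' i with h' | h'
    · exact hP2core i' i j h' h2 h1 hs' hs
    · exact hne (by omega)

lemma splice (N M : DNet) (r₀ : Pick) (hstep : RStep N M r₀) (X : Finset ℕ)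
    (hbf : BinFacts N X) (htc : N.TreeChild)
    (Ms : ℕ → DNet) (rs' : ℕ → Pick) (k' : ℕ) (h0 : Ms 0 = M)
    (hseq' : RCherrySeq Ms rs' k') (hsing' : (Ms k').SingleVertex)
    (hG' : ∀ i < k', ∃ X', BinFacts (Ms i) X' ∧ (Ms i).TreeChild) :
    ∃ Ns rs k, Ns 0 = N ∧ RCherrySeq Ns rs k ∧ (Ns k).SingleVertex ∧
      (∀ i < k, ∃ X', BinFacts (Ns i) X' ∧ (Ns i).TreeChild) := by
  refine ⟨fun m => match m with | 0 => N | m + 1 => Ms m,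
    fun m => match m with | 0 => r₀ | m + 1 => rs' m, k' + 1, rfl, ?_, hsing', ?_⟩
  · intro i hi
    match i with
    | 0 =>
      show RStep N (Ms 0) r₀
      rw [h0]
      exact hstep
    | i + 1 => exact hseq' i (by omega)
  · intro i hi
    match i with
    | 0 => exact ⟨X, hbf, htc⟩
    | i + 1 => exact hG' i (by omega)

lemma forward_exists : ∀ n (N : DNet) (X : Finset ℕ), N.verts.card ≤ n →
    IsRootedBinaryNet N X → N.TreeChild →
    ∃ Ns rs k, Ns 0 = N ∧ RCherrySeq Ns rs k ∧ (Ns k).SingleVertex ∧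
      (∀ i < k, ∃ X', BinFacts (Ns i) X' ∧ (Ns i).TreeChild) := by
  intro n
  induction n with
  | zero =>
    intro N X hcard hbin htc
    exfalso
    rcases bin_cases hbin with hsing | hbf
    · have := hsing.1; omega
    · obtain ⟨ρ, ⟨hρv, -⟩, -⟩ := hbf.root
      have := Finset.card_pos.mpr ⟨ρ, hρv⟩
      omega
  | succ n ih =>
    intro N X hcard hbin htc
    rcases bin_cases hbin with hsing | hbf
    · exact ⟨fun _ => N, fun _ => .cherry 0 0, 0, rfl, fun i h => absurd h (by omega), hsing,
        fun i h => absurd h (by omega)⟩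
    · obtain ⟨M, r, hstep⟩ := exists_step hbf htc
      cases r with
      | cherry a b =>
        rcases cf_of hbf hstep with ⟨-, hsingM, -, hcard2, -⟩ | ⟨p, g, c⟩
        · refine ⟨fun m => if m = 0 then N else M, fun _ => .cherry a b, 1, by simp, ?_, by simp [hsingM], ?_⟩
          · intro i hi
            have : i = 0 := by omega
            subst this
            simpa using hstep
          · intro i hi
            have : i = 0 := by omega
            subst this
            exact ⟨X, by simpa using hbf, by simpa using htc⟩
        · have hMbin := cf_binfacts hbf c
          have hMtc := cf_tc hbf c htc
          have hMcard : M.verts.card ≤ n := by have := c.card2; omega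
          obtain ⟨Ms, rs', k', h0, hseq', hsing', hG'⟩ :=
            ih M (X.erase a) hMcard (binfacts_bin hMbin) hMtc
          exact splice N M _ hstep X hbf htc Ms rs' k' h0 hseq' hsing' hG'
      | ret a b =>
        obtain ⟨pa, pb, qa, qb, c⟩ := rf_of hbf hstep
        have hMbin := rf_binfacts hbf c
        have hMtc := rf_tc hbf c htc
        have hMcard : M.verts.card ≤ n := by have := c.card2; omega
        obtain ⟨Ms, rs', k', h0, hseq', hsing', hG'⟩ :=
          ih M X hMcard (binfacts_bin hMbin) hMtc
        exact splice N M _ hstep X hbf htc Ms rs' k' h0 hseq' hsing' hG'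

lemma succAt_shift {rs : ℕ → Pick} {k i j : ℕ} (h : SuccAt (fun n => rs (n + 1)) k i j) :
    SuccAt rs (k + 1) (i + 1) (j + 1) := by
  obtain ⟨h1, h2, h3, h4⟩ := h
  refine ⟨by omega, by omega, h3, ?_⟩
  intro l hl1 hl2
  obtain ⟨l', rfl⟩ : ∃ l', l = l' + 1 := ⟨l - 1, by omega⟩
  exact h4 l' (by omega) (by omega)

lemma tcseq_shift {rs : ℕ → Pick} {k : ℕ} (h : TreeChildSeq rs (k + 1)) :
    TreeChildSeq (fun n => rs (n + 1)) k := by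
  obtain ⟨h1, h2⟩ := h
  constructor
  · intro i j hr hs
    exact h1 (i + 1) (j + 1) hr (succAt_shift hs)
  · intro i i' j hne hr hr' hs hs'
    exact h2 (i + 1) (i' + 1) (j + 1) (by omega) hr hr' (succAt_shift hs) (succAt_shift hs')

lemma no_step_of_single {N M : DNet} {r : Pick} (hs : N.SingleVertex) (h : RStep N M r) :
    False := by
  cases r with
  | cherry a b =>
    obtain ⟨⟨-, -, -, p, hp, -⟩, -⟩ := h
    rw [hs.2] at hp
    exact absurd hp (Finset.notMem_empty _)
  | ret a b =>
    obtain ⟨⟨-, -, -, pa, pb, hp, -⟩, -⟩ := h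
    rw [hs.2] at hp
    exact absurd hp (Finset.notMem_empty _)

lemma step_bin {N M : DNet} {X : Finset ℕ} {r : Pick} (hb : BinFacts N X)
    (hstep : RStep N M r) : ∃ X', IsRootedBinaryNet M X' := by
  cases r with
  | cherry a b =>
    rcases cf_of hb hstep with ⟨-, -, hbin, -, -⟩ | ⟨p, g, c⟩
    · exact ⟨{b}, hbin⟩
    · exact ⟨X.erase a, binfacts_bin (cf_binfacts hb c)⟩
  | ret a b =>
    obtain ⟨pa, pb, qa, qb, c⟩ := rf_of hb hstep
    exact ⟨X, binfacts_bin (rf_binfacts hb c)⟩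

lemma seq_bin {Ns : ℕ → DNet} {rs : ℕ → Pick} {k : ℕ} {X : Finset ℕ}
    (hb : IsRootedBinaryNet (Ns 0) X) (hseq : RCherrySeq Ns rs k) :
    ∀ i ≤ k, ∃ X', IsRootedBinaryNet (Ns i) X' := by
  intro i
  induction i with
  | zero => exact fun _ => ⟨X, hb⟩
  | succ i ih =>
    intro hik
    obtain ⟨X', hX'⟩ := ih (by omega)
    rcases bin_cases hX' with hsing | hbf
    · exact absurd (hseq i (by omega)) (fun h => no_step_of_single hsing h)
    · exact step_bin hbf (hseq i (by omega))

/-- invariant A: the leaf `a` hangs below a reticulation `q` -/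
def InvA (N : DNet) (a q : ℕ) : Prop := N.IsLeaf a ∧ (q, a) ∈ N.arcs ∧ N.outDeg q = 1

lemma invA_stop {N M : DNet} {X : Finset ℕ} {a q : ℕ} {r : Pick} (hb : BinFacts N X)
    (h : InvA N a q) (hstep : RStep N M r) (hc : r.Contains a) : ∃ z, r = .ret a z := by
  obtain ⟨hal, hqa, hq1⟩ := h
  simp only [Pick.Contains, Pick.fst, Pick.snd] at hc
  cases r with
  | cherry c d =>
    exfalso
    rcases cf_of hb hstep with ⟨-, -, -, -, p, hA⟩ | ⟨p, g, cc⟩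
    · obtain ⟨⟨hcd, -, -, -⟩, -⟩ := hstep
      have hpc : (p, c) ∈ N.arcs := by rw [hA]; simp
      have hpd : (p, d) ∈ N.arcs := by rw [hA]; simp
      have hq2 := outDeg_two_of_two hcd hpc hpd
      rw [hA] at hqa
      simp only [Finset.mem_insert, Finset.mem_singleton, Prod.mk.injEq] at hqa
      rcases hqa with ⟨rfl, -⟩ | ⟨rfl, -⟩ <;> omega
    · rcases hc with rfl | rfl
      · have := cc.aparent q hqa
        rw [this] at hq1
        have := cc.pout
        omega
      · have := cc.bparent q hqa
        rw [this] at hq1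
        have := cc.pout
        omega
  | ret c d =>
    obtain ⟨pa, pb, qa, qb, cc⟩ := rf_of hb hstep
    rcases hc with rfl | rfl
    · exact ⟨d, rfl⟩
    · exfalso
      have := cc.bparent q hqa
      rw [this] at hq1
      have := cc.pbout
      omega

lemma invA_preserve {N M : DNet} {X : Finset ℕ} {a q : ℕ} {r : Pick} (hb : BinFacts N X)
    (h : InvA N a q) (hstep : RStep N M r) (hnc : ¬ r.Contains a) : InvA M a q := by
  obtain ⟨hal, hqa, hq1⟩ := h
  have ha_in : N.inDeg a = 1 := hal.2.1
  have ha_out : N.outDeg a = 0 := hal.2.2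
  simp only [Pick.Contains, Pick.fst, Pick.snd, not_or] at hnc
  obtain ⟨hca, hda⟩ := hnc
  cases r with
  | cherry c d =>
    rcases cf_of hb hstep with ⟨-, -, -, -, p, hA⟩ | ⟨p, g, cc⟩
    · exfalso
      rw [hA] at hqa
      simp only [Finset.mem_insert, Finset.mem_singleton, Prod.mk.injEq] at hqa
      rcases hqa with ⟨-, e⟩ | ⟨-, e⟩
      · exact hca e.symm
      · exact hda e.symm
    · have hac : a ≠ c := fun e => hca e.symm
      have had : a ≠ d := fun e => hda e.symm
      have hap : a ≠ p := fun e => by have h1 := cc.pout; rw [e] at ha_out; omega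
      have hqp : q ≠ p := by
        intro e
        rcases cc.pchildren a (e ▸ hqa) with rfl | rfl
        · exact hac rfl
        · exact had rfl
      have hqg : q ≠ g := by
        intro e
        have : p = a := child_unique hq1 (e ▸ cc.gp) hqa
        exact hap this.symm
      refine ⟨⟨?_, ?_, ?_⟩, ?_, ?_⟩
      · rw [cc.hv]
        simp only [Finset.mem_sdiff, Finset.mem_insert, Finset.mem_singleton, not_or]
        exact ⟨hal.1, hac, hap⟩
      · rw [(cf_degs cc a hac hap).1]; exact ha_in
      · rw [(cf_degs cc a hac hap).2]; exact ha_out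
      · refine (cc.mem q a).mpr (Or.inr ⟨hqa, ?_, ?_, ?_⟩)
        · exact fun ⟨_, e2⟩ => hap e2
        · exact fun ⟨e1, _⟩ => hqp e1
        · exact fun ⟨e1, _⟩ => hqp e1
      · rw [cc.mgout' q hqg hqp]; exact hq1
  | ret c d =>
    obtain ⟨pa, pb, qa, qb, cc⟩ := rf_of hb hstep
    have hac : a ≠ c := fun e => hca e.symm
    have had : a ≠ d := fun e => hda e.symm
    have hapa : a ≠ pa := fun e => by have h1 := cc.paout; rw [e] at ha_out; omega
    have hapb : a ≠ pb := fun e => by have h1 := cc.pbout; rw [e] at ha_out; omega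
    have hqpa : q ≠ pa := by
      intro e
      exact hac (child_unique hq1 hqa (by rw [e]; exact cc.paa))

    have hqpb : q ≠ pb := fun e => by have h1 := cc.pbout; rw [e] at hq1; omega
    have hqqa : q ≠ qa := by
      intro e
      exact hapa (child_unique hq1 hqa (by rw [e]; exact cc.qapa))
    have hqqb : q ≠ qb := by
      intro e
      exact hapb (child_unique hq1 hqa (by rw [e]; exact cc.qbpb))
    refine ⟨⟨?_, ?_, ?_⟩, ?_, ?_⟩
    · rw [cc.hv]
      simp only [Finset.mem_sdiff, Finset.mem_insert, Finset.mem_singleton, not_or]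
      exact ⟨hal.1, hapa, hapb⟩
    · rw [(rf_degs cc a hapa hapb).1]; exact ha_in
    · rw [(rf_degs cc a hapa hapb).2]; exact ha_out
    · refine (cc.mem q a).mpr (Or.inr (Or.inr ⟨hqa, ?_, ?_, ?_, ?_, ?_⟩))
      · exact fun ⟨e1, _⟩ => hqpb e1
      · exact fun ⟨e1, _⟩ => hqpa e1
      · exact fun ⟨_, e2⟩ => hapa e2
      · exact fun ⟨e1, _⟩ => hqpb e1
      · exact fun ⟨_, e2⟩ => hapb e2
    · rw [cc.mgout q hqpa hqpb hqqa hqqb]; exact hq1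

lemma invA_machine : ∀ (k : ℕ) (Ns : ℕ → DNet) (rs : ℕ → Pick) (a q : ℕ),
    RCherrySeq Ns rs k → (Ns k).SingleVertex →
    (∀ i < k, ∃ X', IsRootedBinaryNet (Ns i) X') → InvA (Ns 0) a q →
    ∃ j, j < k ∧ (∀ l < j, ¬ (rs l).Contains a) ∧ ∃ z, rs j = .ret a z := by
  intro k
  induction k with
  | zero =>
    intro Ns rs a q hseq hsing hbin h
    exfalso
    have hq := h.2.1
    rw [hsing.2] at hq
    exact absurd hq (Finset.notMem_empty _)
  | succ k ih =>
    intro Ns rs a q hseq hsing hbin h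
    obtain ⟨X', hX'⟩ := hbin 0 (by omega)
    rcases bin_cases hX' with hs | hbf
    · exact absurd (hseq 0 (by omega)) (fun hh => no_step_of_single hs hh)
    by_cases hc : (rs 0).Contains a
    · obtain ⟨z, hz⟩ := invA_stop hbf h (hseq 0 (by omega)) hc
      exact ⟨0, by omega, fun l hl => absurd hl (by omega), z, hz⟩
    · have h1 : InvA (Ns 1) a q := invA_preserve hbf h (hseq 0 (by omega)) hc
      obtain ⟨j, hjk, hmin, z, hz⟩ := ih (fun n => Ns (n + 1)) (fun n => rs (n + 1)) a q
        (fun i hi => hseq (i + 1) (by omega)) hsing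
        (fun i hi => hbin (i + 1) (by omega)) h1
      refine ⟨j + 1, by omega, ?_, z, hz⟩
      intro l hl
      match l with
      | 0 => exact hc
      | l + 1 => exact hmin l (by omega)

/-- invariant C: two leaves `a ≠ w` below the common (tree) parent `q` -/
def InvC (N : DNet) (a w q : ℕ) : Prop :=
  a ≠ w ∧ N.IsLeaf a ∧ N.IsLeaf w ∧ (q, a) ∈ N.arcs ∧ (q, w) ∈ N.arcs ∧ N.outDeg q = 2

lemma invC_symm {N : DNet} {a w q : ℕ} (h : InvC N a w q) : InvC N w a q :=
  ⟨h.1.symm, h.2.2.1, h.2.1, h.2.2.2.2.1, h.2.2.2.1, h.2.2.2.2.2⟩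

lemma invC_stop_a {N M : DNet} {X : Finset ℕ} {a w q : ℕ} {r : Pick} (hb : BinFacts N X)
    (h : InvC N a w q) (hstep : RStep N M r) (hc : r.Contains a) :
    r.IsCherryPair ∧ r.Contains a ∧ r.Contains w := by
  obtain ⟨haw, hal, hwl, hqa, hqw, hq2⟩ := h
  have hch := two_children hq2 haw hqa hqw
  simp only [Pick.Contains, Pick.fst, Pick.snd] at hc ⊢
  cases r with
  | cherry c d =>
    refine ⟨trivial, hc, ?_⟩
    rcases cf_of hb hstep with ⟨-, -, -, -, p, hA⟩ | ⟨p, g, cc⟩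
    · rw [hA] at hqw
      simp only [Finset.mem_insert, Finset.mem_singleton, Prod.mk.injEq] at hqw
      rcases hqw with ⟨-, e⟩ | ⟨-, e⟩
      · exact Or.inl e.symm
      · exact Or.inr e.symm
    · have hqp : q = p := by
        rcases hc with rfl | rfl
        · exact cc.aparent q hqa
        · exact cc.bparent q hqa
      rcases cc.pchildren w (hqp ▸ hqw) with rfl | rfl
      · exact Or.inl rfl
      · exact Or.inr rfl
  | ret c d =>
    exfalso
    obtain ⟨pa, pb, qa, qb, cc⟩ := rf_of hb hstep
    rcases hc with rfl | rfl
    · have hqpa : q = pa := cc.aparent q hqa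
      have h1 := cc.paout
      rw [hqpa] at hq2
      omega
    · have hqpb : q = pb := cc.bparent q hqa
      rcases cc.pbchildren w (hqpb ▸ hqw) with rfl | rfl
      · have h1 := cc.paout
        have h2 := hwl.2.2
        omega
      · exact haw rfl

lemma invC_stop {N M : DNet} {X : Finset ℕ} {a w q : ℕ} {r : Pick} (hb : BinFacts N X)
    (h : InvC N a w q) (hstep : RStep N M r) (hc : r.Contains a ∨ r.Contains w) :
    r.IsCherryPair ∧ r.Contains a ∧ r.Contains w := by
  rcases hc with hc | hc
  · exact invC_stop_a hb h hstep hc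
  · obtain ⟨h1, h2, h3⟩ := invC_stop_a hb (invC_symm h) hstep hc
    exact ⟨h1, h3, h2⟩

lemma invC_preserve {N M : DNet} {X : Finset ℕ} {a w q : ℕ} {r : Pick} (hb : BinFacts N X)
    (h : InvC N a w q) (hstep : RStep N M r) (hnca : ¬ r.Contains a) (hncw : ¬ r.Contains w) :
    InvC M a w q := by
  obtain ⟨haw, hal, hwl, hqa, hqw, hq2⟩ := h
  have hch := two_children hq2 haw hqa hqw
  simp only [Pick.Contains, Pick.fst, Pick.snd, not_or] at hnca hncw
  cases r with
  | cherry c d =>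
    rcases cf_of hb hstep with ⟨-, -, -, -, p, hA⟩ | ⟨p, g, cc⟩
    · exfalso
      rw [hA] at hqa
      simp only [Finset.mem_insert, Finset.mem_singleton, Prod.mk.injEq] at hqa
      rcases hqa with ⟨-, e⟩ | ⟨-, e⟩
      · exact hnca.1 e.symm
      · exact hnca.2 e.symm
    · have hac : a ≠ c := fun e => hnca.1 e.symm
      have had : a ≠ d := fun e => hnca.2 e.symm
      have hwc : w ≠ c := fun e => hncw.1 e.symm
      have hwd : w ≠ d := fun e => hncw.2 e.symm
      have hap : a ≠ p := fun e => by have h1 := cc.pout; rw [e] at hal; have := hal.2.2; omega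
      have hwp : w ≠ p := fun e => by have h1 := cc.pout; rw [e] at hwl; have := hwl.2.2; omega
      have hqp : q ≠ p := by
        intro e
        rcases cc.pchildren a (e ▸ hqa) with rfl | rfl
        · exact hac rfl
        · exact had rfl
      have hqg : q ≠ g := by
        intro e
        rcases hch p (e ▸ cc.gp) with e2 | e2
        · exact hap e2.symm
        · exact hwp e2.symm
      refine ⟨haw, ⟨?_, ?_, ?_⟩, ⟨?_, ?_, ?_⟩, ?_, ?_, ?_⟩
      · rw [cc.hv]
        simp only [Finset.mem_sdiff, Finset.mem_insert, Finset.mem_singleton, not_or]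
        exact ⟨hal.1, hac, hap⟩
      · rw [(cf_degs cc a hac hap).1]; exact hal.2.1
      · rw [(cf_degs cc a hac hap).2]; exact hal.2.2
      · rw [cc.hv]
        simp only [Finset.mem_sdiff, Finset.mem_insert, Finset.mem_singleton, not_or]
        exact ⟨hwl.1, hwc, hwp⟩
      · rw [(cf_degs cc w hwc hwp).1]; exact hwl.2.1
      · rw [(cf_degs cc w hwc hwp).2]; exact hwl.2.2
      · refine (cc.mem q a).mpr (Or.inr ⟨hqa, ?_, ?_, ?_⟩)
        · exact fun ⟨_, e2⟩ => hap e2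
        · exact fun ⟨e1, _⟩ => hqp e1
        · exact fun ⟨e1, _⟩ => hqp e1
      · refine (cc.mem q w).mpr (Or.inr ⟨hqw, ?_, ?_, ?_⟩)
        · exact fun ⟨_, e2⟩ => hwp e2
        · exact fun ⟨e1, _⟩ => hqp e1
        · exact fun ⟨e1, _⟩ => hqp e1
      · rw [cc.mgout' q hqg hqp]; exact hq2
  | ret c d =>
    obtain ⟨pa, pb, qa, qb, cc⟩ := rf_of hb hstep
    have hac : a ≠ c := fun e => hnca.1 e.symm
    have had : a ≠ d := fun e => hnca.2 e.symm
    have hwc : w ≠ c := fun e => hncw.1 e.symm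
    have hwd : w ≠ d := fun e => hncw.2 e.symm
    have hapa : a ≠ pa := fun e => by have h1 := cc.paout; rw [e] at hal; have := hal.2.2; omega
    have hapb : a ≠ pb := fun e => by have h1 := cc.pbout; rw [e] at hal; have := hal.2.2; omega
    have hwpa : w ≠ pa := fun e => by have h1 := cc.paout; rw [e] at hwl; have := hwl.2.2; omega
    have hwpb : w ≠ pb := fun e => by have h1 := cc.pbout; rw [e] at hwl; have := hwl.2.2; omega
    have hqpa : q ≠ pa := fun e => by have h1 := cc.paout; rw [e] at hq2; omega
    have hqpb : q ≠ pb := by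
      intro e
      rcases cc.pbchildren a (e ▸ hqa) with e2 | e2
      · exact hapa e2
      · exact had e2
    have hqqa : q ≠ qa := by
      intro e
      rcases hch pa (e ▸ cc.qapa) with e2 | e2
      · exact hapa e2.symm
      · exact hwpa e2.symm
    have hqqb : q ≠ qb := by
      intro e
      rcases hch pb (e ▸ cc.qbpb) with e2 | e2
      · exact hapb e2.symm
      · exact hwpb e2.symm
    refine ⟨haw, ⟨?_, ?_, ?_⟩, ⟨?_, ?_, ?_⟩, ?_, ?_, ?_⟩
    · rw [cc.hv]
      simp only [Finset.mem_sdiff, Finset.mem_insert, Finset.mem_singleton, not_or]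
      exact ⟨hal.1, hapa, hapb⟩
    · rw [(rf_degs cc a hapa hapb).1]; exact hal.2.1
    · rw [(rf_degs cc a hapa hapb).2]; exact hal.2.2
    · rw [cc.hv]
      simp only [Finset.mem_sdiff, Finset.mem_insert, Finset.mem_singleton, not_or]
      exact ⟨hwl.1, hwpa, hwpb⟩
    · rw [(rf_degs cc w hwpa hwpb).1]; exact hwl.2.1
    · rw [(rf_degs cc w hwpa hwpb).2]; exact hwl.2.2
    · refine (cc.mem q a).mpr (Or.inr (Or.inr ⟨hqa, ?_, ?_, ?_, ?_, ?_⟩))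
      · exact fun ⟨e1, _⟩ => hqpb e1
      · exact fun ⟨e1, _⟩ => hqpa e1
      · exact fun ⟨e1, _⟩ => hqqa e1
      · exact fun ⟨e1, _⟩ => hqpb e1
      · exact fun ⟨e1, _⟩ => hqqb e1
    · refine (cc.mem q w).mpr (Or.inr (Or.inr ⟨hqw, ?_, ?_, ?_, ?_, ?_⟩))
      · exact fun ⟨e1, _⟩ => hqpb e1
      · exact fun ⟨e1, _⟩ => hqpa e1
      · exact fun ⟨e1, _⟩ => hqqa e1
      · exact fun ⟨e1, _⟩ => hqpb e1
      · exact fun ⟨e1, _⟩ => hqqb e1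
    · rw [cc.mgout q hqpa hqpb hqqa hqqb]; exact hq2

lemma invC_machine : ∀ (k : ℕ) (Ns : ℕ → DNet) (rs : ℕ → Pick) (a w q : ℕ),
    RCherrySeq Ns rs k → (Ns k).SingleVertex →
    (∀ i < k, ∃ X', IsRootedBinaryNet (Ns i) X') → InvC (Ns 0) a w q →
    ∃ j, j < k ∧ (∀ l < j, ¬ (rs l).Contains a ∧ ¬ (rs l).Contains w) ∧
      (rs j).IsCherryPair ∧ (rs j).Contains a ∧ (rs j).Contains w := by
  intro k
  induction k with
  | zero =>
    intro Ns rs a w q hseq hsing hbin h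
    exfalso
    have hq := h.2.2.2.1
    rw [hsing.2] at hq
    exact absurd hq (Finset.notMem_empty _)
  | succ k ih =>
    intro Ns rs a w q hseq hsing hbin h
    obtain ⟨X', hX'⟩ := hbin 0 (by omega)
    rcases bin_cases hX' with hs | hbf
    · exact absurd (hseq 0 (by omega)) (fun hh => no_step_of_single hs hh)
    by_cases hc : (rs 0).Contains a ∨ (rs 0).Contains w
    · obtain ⟨h1, h2, h3⟩ := invC_stop hbf h (hseq 0 (by omega)) hc
      exact ⟨0, by omega, fun l hl => absurd hl (by omega), h1, h2, h3⟩
    · push_neg at hc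
      have h1 : InvC (Ns 1) a w q := invC_preserve hbf h (hseq 0 (by omega)) hc.1 hc.2
      obtain ⟨j, hjk, hmin, g1, g2, g3⟩ := ih (fun n => Ns (n + 1)) (fun n => rs (n + 1)) a w q
        (fun i hi => hseq (i + 1) (by omega)) hsing
        (fun i hi => hbin (i + 1) (by omega)) h1
      refine ⟨j + 1, by omega, ?_, g1, g2, g3⟩
      intro l hl
      match l with
      | 0 => exact hc
      | l + 1 => exact hmin l (by omega)

/-- invariant B: the leaf `a` hangs below a tree vertex `q` that also has a
reticulation child -/
def InvB (N : DNet) (a q : ℕ) : Prop :=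
  N.IsLeaf a ∧ (q, a) ∈ N.arcs ∧ N.outDeg q = 2 ∧ ∃ v, (q, v) ∈ N.arcs ∧ N.IsRet v

lemma invB_stop {N M : DNet} {X : Finset ℕ} {a q : ℕ} {r : Pick} (hb : BinFacts N X)
    (h : InvB N a q) (hstep : RStep N M r) (hc : r.Contains a) : ∃ z, r = .ret z a := by
  obtain ⟨hal, hqa, hq2, v, hqv, hv⟩ := h
  have hav : a ≠ v := fun e => by
    have h1 := hal.2.2; have h2 := hv.2.2; rw [e] at h1; omega
  have hch := two_children hq2 hav hqa hqv
  simp only [Pick.Contains, Pick.fst, Pick.snd] at hc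
  cases r with
  | cherry c d =>
    exfalso
    obtain ⟨hcd, hcl, hdl, -⟩ := hstep.1
    rcases cf_of hb hstep with ⟨-, -, -, -, p, hA⟩ | ⟨p, g, cc⟩
    · rw [hA] at hqv
      simp only [Finset.mem_insert, Finset.mem_singleton, Prod.mk.injEq] at hqv
      rcases hqv with ⟨-, e⟩ | ⟨-, e⟩
      · rw [← e] at hcl; have h1 := hcl.2.2; have h2 := hv.2.2; omega
      · rw [← e] at hdl; have h1 := hdl.2.2; have h2 := hv.2.2; omega
    · rcases hc with rfl | rfl
      · have hqp : q = p := cc.aparent q hqa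
        rcases cc.pchildren v (hqp ▸ hqv) with rfl | rfl
        · exact hav rfl
        · have h1 := cc.bout; have h2 := hv.2.2; omega
      · have hqp : q = p := cc.bparent q hqa
        rcases cc.pchildren v (hqp ▸ hqv) with rfl | rfl
        · have h1 := cc.aout; have h2 := hv.2.2; omega
        · exact hav rfl
  | ret c d =>
    obtain ⟨pa, pb, qa, qb, cc⟩ := rf_of hb hstep
    rcases hc with rfl | rfl
    · exfalso
      have hqpa : q = pa := cc.aparent q hqa
      have h1 := cc.paout
      rw [hqpa] at hq2
      omega
    · exact ⟨c, rfl⟩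

lemma invB_step {N M : DNet} {X : Finset ℕ} {a q : ℕ} {r : Pick} (hb : BinFacts N X)
    (h : InvB N a q) (hstep : RStep N M r) (hnc : ¬ r.Contains a) :
    InvB M a q ∨ (∃ w β, r = .ret w β ∧ InvC M a w q) := by
  obtain ⟨hal, hqa, hq2, v, hqv, hv⟩ := h
  have hav : a ≠ v := fun e => by
    have h1 := hal.2.2; have h2 := hv.2.2; rw [e] at h1; omega
  have hch := two_children hq2 hav hqa hqv
  simp only [Pick.Contains, Pick.fst, Pick.snd, not_or] at hnc
  obtain ⟨hca, hda⟩ := hnc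
  cases r with
  | cherry c d =>
    left
    obtain ⟨hcd, hcl, hdl, -⟩ := hstep.1
    rcases cf_of hb hstep with ⟨-, -, -, -, p, hA⟩ | ⟨p, g, cc⟩
    · exfalso
      rw [hA] at hqv
      simp only [Finset.mem_insert, Finset.mem_singleton, Prod.mk.injEq] at hqv
      rcases hqv with ⟨-, e⟩ | ⟨-, e⟩
      · rw [← e] at hcl; have h1 := hcl.2.2; have h2 := hv.2.2; omega
      · rw [← e] at hdl; have h1 := hdl.2.2; have h2 := hv.2.2; omega
    · have hac : a ≠ c := fun e => hca e.symm
      have had : a ≠ d := fun e => hda e.symm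
      have hvc : v ≠ c := fun e => by
        have h1 := cc.aout; have h2 := hv.2.2; rw [e] at h2; omega
      have hvd : v ≠ d := fun e => by
        have h1 := cc.bout; have h2 := hv.2.2; rw [e] at h2; omega
      have hvp : v ≠ p := fun e => by
        have h1 := cc.pout; have h2 := hv.2.2; rw [e] at h2; omega
      have hap : a ≠ p := fun e => by
        have h1 := cc.pout; have h2 := hal.2.2; rw [e] at h2; omega
      have hqp : q ≠ p := by
        intro e
        rcases cc.pchildren a (e ▸ hqa) with rfl | rfl
        · exact hac rfl
        · exact had rfl
      have hqg : q ≠ g := by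
        intro e
        rcases hch p (e ▸ cc.gp) with e2 | e2
        · exact hap e2.symm
        · exact hvp e2.symm
      refine ⟨⟨?_, ?_, ?_⟩, ?_, ?_, v, ?_, ?_, ?_, ?_⟩
      · rw [cc.hv]
        simp only [Finset.mem_sdiff, Finset.mem_insert, Finset.mem_singleton, not_or]
        exact ⟨hal.1, hac, hap⟩
      · rw [(cf_degs cc a hac hap).1]; exact hal.2.1
      · rw [(cf_degs cc a hac hap).2]; exact hal.2.2
      · refine (cc.mem q a).mpr (Or.inr ⟨hqa, ?_, ?_, ?_⟩)
        · exact fun ⟨_, e2⟩ => hap e2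
        · exact fun ⟨e1, _⟩ => hqp e1
        · exact fun ⟨e1, _⟩ => hqp e1
      · rw [cc.mgout' q hqg hqp]; exact hq2
      · refine (cc.mem q v).mpr (Or.inr ⟨hqv, ?_, ?_, ?_⟩)
        · exact fun ⟨_, e2⟩ => hvp e2
        · exact fun ⟨e1, _⟩ => hqp e1
        · exact fun ⟨e1, _⟩ => hqp e1
      · rw [cc.hv]
        simp only [Finset.mem_sdiff, Finset.mem_insert, Finset.mem_singleton, not_or]
        exact ⟨hv.1, hvc, hvp⟩
      · rw [(cf_degs cc v hvc hvp).1]; exact hv.2.1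
      · rw [(cf_degs cc v hvc hvp).2]; exact hv.2.2
  | ret c d =>
    obtain ⟨pa, pb, qa, qb, cc⟩ := rf_of hb hstep
    have hac : a ≠ c := fun e => hca e.symm
    have had : a ≠ d := fun e => hda e.symm
    have hapa : a ≠ pa := fun e => by
      have h1 := cc.paout; have h2 := hal.2.2; rw [e] at h2; omega
    have hapb : a ≠ pb := fun e => by
      have h1 := cc.pbout; have h2 := hal.2.2; rw [e] at h2; omega
    have hvc : v ≠ c := fun e => by
      have h1 := cc.aout; have h2 := hv.2.2; rw [e] at h2; omega
    have hvd : v ≠ d := fun e => by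
      have h1 := cc.bout; have h2 := hv.2.2; rw [e] at h2; omega
    have hvpb : v ≠ pb := fun e => by
      have h1 := cc.pbout; have h2 := hv.2.2; rw [e] at h2; omega
    have hqpa : q ≠ pa := fun e => by
      have h1 := cc.paout; rw [e] at hq2; omega
    have hqpb : q ≠ pb := by
      intro e
      rcases cc.pbchildren a (e ▸ hqa) with e2 | e2
      · exact hapa e2
      · exact had e2
    by_cases hvpa : v = pa
    · -- the reticulation below q is reduced: transition to InvC with w = c
      subst hvpa
      have hqqa : q = qa := by
        rcases cc.paparents q hqv with e | e
        · exact absurd e hqpb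
        · exact e
      right
      refine ⟨c, d, rfl, hac, ⟨?_, ?_, ?_⟩, ⟨?_, ?_, ?_⟩, ?_, ?_, ?_⟩
      · rw [cc.hv]
        simp only [Finset.mem_sdiff, Finset.mem_insert, Finset.mem_singleton, not_or]
        exact ⟨hal.1, hapa, hapb⟩
      · rw [(rf_degs cc a hapa hapb).1]; exact hal.2.1
      · rw [(rf_degs cc a hapa hapb).2]; exact hal.2.2
      · rw [cc.hv]
        simp only [Finset.mem_sdiff, Finset.mem_insert, Finset.mem_singleton, not_or]
        exact ⟨cc.av, fun e => cc.pa_a e.symm, fun e => cc.pb_a e.symm⟩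
      · exact cc.main
      · exact cc.maout
      · refine (cc.mem q a).mpr (Or.inr (Or.inr ⟨hqa, ?_, ?_, ?_, ?_, ?_⟩))
        · exact fun ⟨e1, _⟩ => hqpb e1
        · exact fun ⟨e1, _⟩ => hqpa e1
        · exact fun ⟨_, e2⟩ => hapa e2
        · exact fun ⟨e1, _⟩ => hqpb e1
        · exact fun ⟨_, e2⟩ => hapb e2
      · rw [hqqa]; exact cc.mqaa
      · rw [hqqa, cc.mqaout, ← hqqa]; exact hq2
    · -- the reticulation below q survives
      left
      have hqqa : q ≠ qa := by
        intro e
        rcases hch pa (e ▸ cc.qapa) with e2 | e2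
        · exact hapa e2.symm
        · exact hvpa e2.symm
      have hqqb : q ≠ qb := by
        intro e
        rcases hch pb (e ▸ cc.qbpb) with e2 | e2
        · exact hapb e2.symm
        · exact hvpb e2.symm
      refine ⟨⟨?_, ?_, ?_⟩, ?_, ?_, v, ?_, ?_, ?_, ?_⟩
      · rw [cc.hv]
        simp only [Finset.mem_sdiff, Finset.mem_insert, Finset.mem_singleton, not_or]
        exact ⟨hal.1, hapa, hapb⟩
      · rw [(rf_degs cc a hapa hapb).1]; exact hal.2.1
      · rw [(rf_degs cc a hapa hapb).2]; exact hal.2.2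
      · refine (cc.mem q a).mpr (Or.inr (Or.inr ⟨hqa, ?_, ?_, ?_, ?_, ?_⟩))
        · exact fun ⟨e1, _⟩ => hqpb e1
        · exact fun ⟨e1, _⟩ => hqpa e1
        · exact fun ⟨_, e2⟩ => hapa e2
        · exact fun ⟨e1, _⟩ => hqpb e1
        · exact fun ⟨_, e2⟩ => hapb e2
      · rw [cc.mgout q hqpa hqpb hqqa hqqb]; exact hq2
      · refine (cc.mem q v).mpr (Or.inr (Or.inr ⟨hqv, ?_, ?_, ?_, ?_, ?_⟩))
        · exact fun ⟨e1, _⟩ => hqpb e1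
        · exact fun ⟨e1, _⟩ => hqpa e1
        · exact fun ⟨_, e2⟩ => hvpa e2
        · exact fun ⟨e1, _⟩ => hqpb e1
        · exact fun ⟨_, e2⟩ => hvpb e2
      · rw [cc.hv]
        simp only [Finset.mem_sdiff, Finset.mem_insert, Finset.mem_singleton, not_or]
        exact ⟨hv.1, hvpa, hvpb⟩
      · rw [(rf_degs cc v hvpa hvpb).1]; exact hv.2.1
      · rw [(rf_degs cc v hvpa hvpb).2]; exact hv.2.2

lemma invB_machine : ∀ (k : ℕ) (Ns : ℕ → DNet) (rs : ℕ → Pick) (a q : ℕ),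
    RCherrySeq Ns rs k → (Ns k).SingleVertex →
    (∀ i < k, ∃ X', IsRootedBinaryNet (Ns i) X') → InvB (Ns 0) a q →
    (∃ j, j < k ∧ (∀ l < j, ¬ (rs l).Contains a) ∧ ∃ z, rs j = .ret z a) ∨
    (∃ i' j w, i' < j ∧ j < k ∧ (∀ l < j, ¬ (rs l).Contains a) ∧
      (∀ l, i' < l → l < j → ¬ (rs l).Contains w) ∧ (∃ β, rs i' = .ret w β) ∧
      (rs j).IsCherryPair ∧ (rs j).Contains a ∧ (rs j).Contains w) := by
  intro k
  induction k with
  | zero =>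
    intro Ns rs a q hseq hsing hbin h
    exfalso
    have hq := h.2.1
    rw [hsing.2] at hq
    exact absurd hq (Finset.notMem_empty _)
  | succ k ih =>
    intro Ns rs a q hseq hsing hbin h
    obtain ⟨X', hX'⟩ := hbin 0 (by omega)
    rcases bin_cases hX' with hs | hbf
    · exact absurd (hseq 0 (by omega)) (fun hh => no_step_of_single hs hh)
    by_cases hc : (rs 0).Contains a
    · obtain ⟨z, hz⟩ := invB_stop hbf h (hseq 0 (by omega)) hc
      exact Or.inl ⟨0, by omega, fun l hl => absurd hl (by omega), z, hz⟩
    · rcases invB_step hbf h (hseq 0 (by omega)) hc with h1 | ⟨w, β, hr0, hC⟩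
      · rcases ih (fun n => Ns (n + 1)) (fun n => rs (n + 1)) a q
          (fun i hi => hseq (i + 1) (by omega)) hsing
          (fun i hi => hbin (i + 1) (by omega)) h1 with
          ⟨j, hjk, hmin, z, hz⟩ | ⟨i', j, w, hi'j, hjk, hminA, hminW, ⟨β, hri'⟩, g1, g2, g3⟩
        · refine Or.inl ⟨j + 1, by omega, ?_, z, hz⟩
          intro l hl
          match l with
          | 0 => exact hc
          | l + 1 => exact hmin l (by omega)
        · refine Or.inr ⟨i' + 1, j + 1, w, by omega, by omega, ?_, ?_, ⟨β, hri'⟩, g1, g2, g3⟩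
          · intro l hl
            match l with
            | 0 => exact hc
            | l + 1 => exact hminA l (by omega)
          · intro l hl1 hl2
            match l with
            | l + 1 => exact hminW l (by omega) (by omega)
      · obtain ⟨j, hjk, hmin, g1, g2, g3⟩ := invC_machine k (fun n => Ns (n + 1))
          (fun n => rs (n + 1)) a w q (fun i hi => hseq (i + 1) (by omega)) hsing
          (fun i hi => hbin (i + 1) (by omega)) hC
        refine Or.inr ⟨0, j + 1, w, by omega, by omega, ?_, ?_, ⟨β, hr0⟩, g1, g2, g3⟩
        · intro l hl
          match l with
          | 0 => exact hc
          | l + 1 => exact (hmin l (by omega)).1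
        · intro l hl1 hl2
          match l with
          | l + 1 => exact (hmin l (by omega)).2

lemma backward : ∀ (k : ℕ) (Ns : ℕ → DNet) (rs : ℕ → Pick) (X : Finset ℕ),
    IsRootedBinaryNet (Ns 0) X → RCherrySeq Ns rs k → (Ns k).SingleVertex →
    TreeChildSeq rs k → (Ns 0).TreeChild := by
  intro k
  induction k with
  | zero =>
    intro Ns rs X hbin hseq hsing htcs v hv hout
    exfalso
    apply hout
    apply outDeg_eq_zero
    intro w hw
    rw [hsing.2] at hw
    exact absurd hw (Finset.notMem_empty _)
  | succ k ih =>
    intro Ns rs X hbin hseq hsing htcs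
    rcases bin_cases hbin with hs | hbf
    · intro v hv hout
      exfalso
      apply hout
      apply outDeg_eq_zero
      intro w hw
      rw [hs.2] at hw
      exact absurd hw (Finset.notMem_empty _)
    · have hstep0 := hseq 0 (by omega)
      obtain ⟨X₁, hbin1⟩ := step_bin hbf hstep0
      have hseq' : RCherrySeq (fun n => Ns (n + 1)) (fun n => rs (n + 1)) k :=
        fun i hi => hseq (i + 1) (by omega)
      have hMtc : (Ns 1).TreeChild :=
        ih (fun n => Ns (n + 1)) (fun n => rs (n + 1)) X₁ hbin1 hseq' hsing (tcseq_shift htcs)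
      have hbins : ∀ i < k, ∃ X', IsRootedBinaryNet (Ns (i + 1)) X' :=
        fun i hi => seq_bin hbin1 hseq' i (by omega)
      have hnosibM : ¬ (Ns 1).HasSiblingRets := by
        rcases bin_cases hbin1 with hsM | hbfM
        · rintro ⟨P', u', v', -, -, -, hPu', -⟩
          rw [hsM.2] at hPu'
          exact absurd hPu' (Finset.notMem_empty _)
        · exact tc_no_sib hbfM hMtc
      have hverts1 : ∀ {w pa pb : ℕ}, (Ns 1).verts = (Ns 0).verts \ {pa, pb} →
          w ∈ (Ns 0).verts → w ≠ pa → w ≠ pb → w ∈ (Ns 1).verts := by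
        intro w pa pb hv hw h1 h2
        rw [hv]
        simp only [Finset.mem_sdiff, Finset.mem_insert, Finset.mem_singleton, not_or]
        exact ⟨hw, h1, h2⟩
      apply tc_of hbf
      · -- no stack
        rintro ⟨u, v, hu, hv, huv⟩
        cases hr0 : rs 0 with
        | cherry c d =>
          rw [hr0] at hstep0
          obtain ⟨hcd, hcl, hdl, -⟩ := hstep0.1
          rcases cf_of hbf hstep0 with ⟨-, -, -, -, p, hA⟩ | ⟨p, g, cc⟩
          · rw [hA] at huv
            simp only [Finset.mem_insert, Finset.mem_singleton, Prod.mk.injEq] at huv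
            rcases huv with ⟨-, e⟩ | ⟨-, e⟩
            · rw [← e] at hcl; have h1 := hcl.2.2; have h2 := hv.2.2; omega
            · rw [← e] at hdl; have h1 := hdl.2.2; have h2 := hv.2.2; omega
          · have huc : u ≠ c := fun e => by
              have h1 := cc.aout; have h2 := hu.2.2; rw [e] at h2; omega
            have hud : u ≠ d := fun e => by
              have h1 := cc.bout; have h2 := hu.2.2; rw [e] at h2; omega
            have hup : u ≠ p := fun e => by
              have h1 := cc.pout; have h2 := hu.2.2; rw [e] at h2; omega
            have hvc : v ≠ c := fun e => by
              have h1 := cc.aout; have h2 := hv.2.2; rw [e] at h2; omega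
            have hvd : v ≠ d := fun e => by
              have h1 := cc.bout; have h2 := hv.2.2; rw [e] at h2; omega
            have hvp : v ≠ p := fun e => by
              have h1 := cc.pout; have h2 := hv.2.2; rw [e] at h2; omega
            refine absurd ?_ (tc_no_stack hMtc)
            refine ⟨u, v, ⟨hverts1 cc.hv hu.1 huc hup, ?_, ?_⟩,
              ⟨hverts1 cc.hv hv.1 hvc hvp, ?_, ?_⟩, ?_⟩
            · rw [(cf_degs cc u huc hup).1]; exact hu.2.1
            · rw [(cf_degs cc u huc hup).2]; exact hu.2.2
            · rw [(cf_degs cc v hvc hvp).1]; exact hv.2.1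
            · rw [(cf_degs cc v hvc hvp).2]; exact hv.2.2
            · refine (cc.mem u v).mpr (Or.inr ⟨huv, ?_, ?_, ?_⟩)
              · exact fun ⟨_, e2⟩ => hvp e2
              · exact fun ⟨e1, _⟩ => hup e1
              · exact fun ⟨e1, _⟩ => hup e1
        | ret c d =>
          rw [hr0] at hstep0
          obtain ⟨pa, pb, qa, qb, cc⟩ := rf_of hbf hstep0
          have huc : u ≠ c := fun e => by
            have h1 := cc.aout; have h2 := hu.2.2; rw [e] at h2; omega
          have hud : u ≠ d := fun e => by
            have h1 := cc.bout; have h2 := hu.2.2; rw [e] at h2; omega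
          have hupb : u ≠ pb := fun e => by
            have h1 := cc.pbout; have h2 := hu.2.2; rw [e] at h2; omega
          have hvc : v ≠ c := fun e => by
            have h1 := cc.aout; have h2 := hv.2.2; rw [e] at h2; omega
          have hvd : v ≠ d := fun e => by
            have h1 := cc.bout; have h2 := hv.2.2; rw [e] at h2; omega
          have hvpb : v ≠ pb := fun e => by
            have h1 := cc.pbout; have h2 := hv.2.2; rw [e] at h2; omega
          by_cases hvpa : v = pa
          · -- case A: u = qa, a stack on top of the reduced reticulation
            have hu_qa : u = qa := by
              rcases cc.paparents u (hvpa ▸ huv) with e | e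
              · exact absurd e hupb
              · exact e
            have hA1 : InvA (Ns 1) c qa := by
              refine ⟨⟨hverts1 cc.hv cc.av (fun e => cc.pa_a e.symm) (fun e => cc.pb_a e.symm),
                cc.main, cc.maout⟩, cc.mqaa, ?_⟩
              rw [cc.mqaout, ← hu_qa]
              exact hu.2.2
            obtain ⟨j, hjk, hmin, z, hz⟩ := invA_machine k (fun n => Ns (n + 1))
              (fun n => rs (n + 1)) c qa hseq' hsing hbins hA1
            have hsucc : SuccAt rs (k + 1) 0 (j + 1) := by
              refine ⟨by omega, by omega, ?_, ?_⟩
              · rw [hr0, hz]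
                simp [Pick.Contains, Pick.fst, Pick.snd]
              · intro l hl1 hl2
                obtain ⟨l', rfl⟩ : ∃ l', l = l' + 1 := ⟨l - 1, by omega⟩
                rw [hr0]
                simp only [Pick.fst]
                exact hmin l' (by omega)
            have := htcs.1 0 (j + 1) (by rw [hr0]; trivial) hsucc
            rw [hz] at this
            simp only [Pick.IsCherryPair] at this
          · -- the stack survives into `Ns 1`
            have hupa : u ≠ pa := by
              intro e
              exact hvc (cc.pachild v (e ▸ huv))
            refine absurd ?_ (fun hst => tc_no_stack hMtc hst)
            refine ⟨u, v, ⟨hverts1 cc.hv hu.1 hupa hupb, ?_, ?_⟩,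
              ⟨hverts1 cc.hv hv.1 hvpa hvpb, ?_, ?_⟩, ?_⟩
            · rw [(rf_degs cc u hupa hupb).1]; exact hu.2.1
            · rw [(rf_degs cc u hupa hupb).2]; exact hu.2.2
            · rw [(rf_degs cc v hvpa hvpb).1]; exact hv.2.1
            · rw [(rf_degs cc v hvpa hvpb).2]; exact hv.2.2
            · refine (cc.mem u v).mpr (Or.inr (Or.inr ⟨huv, ?_, ?_, ?_, ?_, ?_⟩))
              · exact fun ⟨_, e2⟩ => hvpa e2
              · exact fun ⟨e1, _⟩ => hupa e1
              · exact fun ⟨_, e2⟩ => hvpa e2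
              · exact fun ⟨_, e2⟩ => hvd e2
              · exact fun ⟨_, e2⟩ => hvpb e2
      · -- no sibling reticulations
        rintro ⟨P, u, v, huv, hu, hv, hPu, hPv⟩
        cases hr0 : rs 0 with
        | cherry c d =>
          rw [hr0] at hstep0
          obtain ⟨hcd, hcl, hdl, -⟩ := hstep0.1
          rcases cf_of hbf hstep0 with ⟨-, -, -, -, p, hA⟩ | ⟨p, g, cc⟩
          · rw [hA] at hPu
            simp only [Finset.mem_insert, Finset.mem_singleton, Prod.mk.injEq] at hPu
            rcases hPu with ⟨-, e⟩ | ⟨-, e⟩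
            · rw [← e] at hcl; have h1 := hcl.2.2; have h2 := hu.2.2; omega
            · rw [← e] at hdl; have h1 := hdl.2.2; have h2 := hu.2.2; omega
          · have huc : u ≠ c := fun e => by
              have h1 := cc.aout; have h2 := hu.2.2; rw [e] at h2; omega
            have hud : u ≠ d := fun e => by
              have h1 := cc.bout; have h2 := hu.2.2; rw [e] at h2; omega
            have hup : u ≠ p := fun e => by
              have h1 := cc.pout; have h2 := hu.2.2; rw [e] at h2; omega
            have hvc : v ≠ c := fun e => by
              have h1 := cc.aout; have h2 := hv.2.2; rw [e] at h2; omega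
            have hvd : v ≠ d := fun e => by
              have h1 := cc.bout; have h2 := hv.2.2; rw [e] at h2; omega
            have hvp : v ≠ p := fun e => by
              have h1 := cc.pout; have h2 := hv.2.2; rw [e] at h2; omega
            have hPp : P ≠ p := by
              intro e
              rcases cc.pchildren u (e ▸ hPu) with rfl | rfl
              · exact huc rfl
              · exact hud rfl
            refine hnosibM ⟨P, u, v, huv, ⟨hverts1 cc.hv hu.1 huc hup, ?_, ?_⟩,
              ⟨hverts1 cc.hv hv.1 hvc hvp, ?_, ?_⟩, ?_, ?_⟩
            · rw [(cf_degs cc u huc hup).1]; exact hu.2.1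
            · rw [(cf_degs cc u huc hup).2]; exact hu.2.2
            · rw [(cf_degs cc v hvc hvp).1]; exact hv.2.1
            · rw [(cf_degs cc v hvc hvp).2]; exact hv.2.2
            · refine (cc.mem P u).mpr (Or.inr ⟨hPu, ?_, ?_, ?_⟩)
              · exact fun ⟨_, e2⟩ => hup e2
              · exact fun ⟨e1, _⟩ => hPp e1
              · exact fun ⟨e1, _⟩ => hPp e1
            · refine (cc.mem P v).mpr (Or.inr ⟨hPv, ?_, ?_, ?_⟩)
              · exact fun ⟨_, e2⟩ => hvp e2
              · exact fun ⟨e1, _⟩ => hPp e1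
              · exact fun ⟨e1, _⟩ => hPp e1
        | ret c d =>
          rw [hr0] at hstep0
          obtain ⟨pa, pb, qa, qb, cc⟩ := rf_of hbf hstep0
          have hkey : ∀ u' v', u' ≠ v' → (Ns 0).IsRet u' → (Ns 0).IsRet v' →
              (P, u') ∈ (Ns 0).arcs → (P, v') ∈ (Ns 0).arcs → v' = pa → False := by
            intro u' v' huv' hu' hv' hPu' hPv' hv'pa
            subst hv'pa
            have hu'c : u' ≠ c := fun e => by
              have h1 := cc.aout; have h2 := hu'.2.2; rw [e] at h2; omega
            have hu'd : u' ≠ d := fun e => by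
              have h1 := cc.bout; have h2 := hu'.2.2; rw [e] at h2; omega
            have hu'pb : u' ≠ pb := fun e => by
              have h1 := cc.pbout; have h2 := hu'.2.2; rw [e] at h2; omega
            have hPqa : P = qa := by
              rcases cc.paparents P hPv' with e | e
              · exfalso
                subst e
                rcases cc.pbchildren u' hPu' with e2 | e2
                · exact huv' e2
                · exact hu'd e2
              · exact e
            subst hPqa
            have hqaout : (Ns 0).outDeg P = 2 := by
              have h2 := outDeg_two_of_two huv' hPu' hPv'
              rcases hbf.classify P (hbf.ends _ cc.qapa).1 with hr | hl | ht | hq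
              · exact hr.2.2
              · rw [hl.2.2] at h2; omega
              · exact ht.2.2
              · rw [hq.2.2] at h2; omega
            have hB1 : InvB (Ns 1) c P := by
              refine ⟨⟨hverts1 cc.hv cc.av (fun e => cc.pa_a e.symm) (fun e => cc.pb_a e.symm),
                cc.main, cc.maout⟩, cc.mqaa, by rw [cc.mqaout]; exact hqaout, u', ?_, ?_⟩
              · refine (cc.mem P u').mpr (Or.inr (Or.inr ⟨hPu', ?_, ?_, ?_, ?_, ?_⟩))
                · exact fun ⟨e1, _⟩ => cc.qa_pb e1
                · exact fun ⟨e1, _⟩ => cc.pa_qa e1.symm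
                · exact fun ⟨_, e2⟩ => huv' e2
                · exact fun ⟨e1, _⟩ => cc.qa_pb e1
                · exact fun ⟨_, e2⟩ => hu'pb e2
              · refine ⟨hverts1 cc.hv hu'.1 (fun e => huv' e) hu'pb, ?_, ?_⟩
                · rw [(rf_degs cc u' (fun e => huv' e) hu'pb).1]; exact hu'.2.1
                · rw [(rf_degs cc u' (fun e => huv' e) hu'pb).2]; exact hu'.2.2
            rcases invB_machine k (fun n => Ns (n + 1)) (fun n => rs (n + 1)) c P
              hseq' hsing hbins hB1 with
              ⟨j, hjk, hmin, z, hz⟩ | ⟨i', j, w, hi'j, hjk, hminA, hminW, ⟨β, hri'⟩, g1, g2, g3⟩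
            · have hsucc : SuccAt rs (k + 1) 0 (j + 1) := by
                refine ⟨by omega, by omega, ?_, ?_⟩
                · rw [hr0, hz]
                  simp [Pick.Contains, Pick.fst, Pick.snd]
                · intro l hl1 hl2
                  obtain ⟨l', rfl⟩ : ∃ l', l = l' + 1 := ⟨l - 1, by omega⟩
                  rw [hr0]
                  simp only [Pick.fst]
                  exact hmin l' (by omega)
              have := htcs.1 0 (j + 1) (by rw [hr0]; trivial) hsucc
              rw [hz] at this
              simp only [Pick.IsCherryPair] at this
            · have hs1 : SuccAt rs (k + 1) 0 (j + 1) := by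
                refine ⟨by omega, by omega, ?_, ?_⟩
                · rw [hr0]
                  simp only [Pick.fst]
                  exact g2
                · intro l hl1 hl2
                  obtain ⟨l', rfl⟩ : ∃ l', l = l' + 1 := ⟨l - 1, by omega⟩
                  rw [hr0]
                  simp only [Pick.fst]
                  exact hminA l' (by omega)
              have hs2 : SuccAt rs (k + 1) (i' + 1) (j + 1) := by
                refine ⟨by omega, by omega, ?_, ?_⟩
                · rw [hri']
                  simp only [Pick.fst]
                  exact g3
                · intro l hl1 hl2
                  obtain ⟨l', rfl⟩ : ∃ l', l = l' + 1 := ⟨l - 1, by omega⟩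
                  rw [hri']
                  simp only [Pick.fst]
                  exact hminW l' (by omega) (by omega)
              exact htcs.2 0 (i' + 1) (j + 1) (by omega) (by rw [hr0]; trivial)
                (by rw [hri']; trivial) hs1 hs2
          by_cases hpauv : u = pa ∨ v = pa
          · rcases hpauv with e | e
            · exact hkey v u (Ne.symm huv) hv hu hPv hPu e
            · exact hkey u v huv hu hv hPu hPv e
          · push_neg at hpauv
            obtain ⟨hupa, hvpa⟩ := hpauv
            have huc : u ≠ c := fun e => by
              have h1 := cc.aout; have h2 := hu.2.2; rw [e] at h2; omega
            have hud : u ≠ d := fun e => by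
              have h1 := cc.bout; have h2 := hu.2.2; rw [e] at h2; omega
            have hupb : u ≠ pb := fun e => by
              have h1 := cc.pbout; have h2 := hu.2.2; rw [e] at h2; omega
            have hvc : v ≠ c := fun e => by
              have h1 := cc.aout; have h2 := hv.2.2; rw [e] at h2; omega
            have hvd : v ≠ d := fun e => by
              have h1 := cc.bout; have h2 := hv.2.2; rw [e] at h2; omega
            have hvpb : v ≠ pb := fun e => by
              have h1 := cc.pbout; have h2 := hv.2.2; rw [e] at h2; omega
            refine hnosibM ⟨P, u, v, huv, ⟨hverts1 cc.hv hu.1 hupa hupb, ?_, ?_⟩,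
              ⟨hverts1 cc.hv hv.1 hvpa hvpb, ?_, ?_⟩, ?_, ?_⟩
            · rw [(rf_degs cc u hupa hupb).1]; exact hu.2.1
            · rw [(rf_degs cc u hupa hupb).2]; exact hu.2.2
            · rw [(rf_degs cc v hvpa hvpb).1]; exact hv.2.1
            · rw [(rf_degs cc v hvpa hvpb).2]; exact hv.2.2
            · refine (cc.mem P u).mpr (Or.inr (Or.inr ⟨hPu, ?_, ?_, ?_, ?_, ?_⟩))
              · exact fun ⟨_, e2⟩ => hupa e2
              · exact fun ⟨_, e2⟩ => huc e2
              · exact fun ⟨_, e2⟩ => hupa e2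
              · exact fun ⟨_, e2⟩ => hud e2
              · exact fun ⟨_, e2⟩ => hupb e2
            · refine (cc.mem P v).mpr (Or.inr (Or.inr ⟨hPv, ?_, ?_, ?_, ?_, ?_⟩))
              · exact fun ⟨_, e2⟩ => hvpa e2
              · exact fun ⟨_, e2⟩ => hvc e2
              · exact fun ⟨_, e2⟩ => hvpa e2
              · exact fun ⟨_, e2⟩ => hvd e2
              · exact fun ⟨_, e2⟩ => hvpb e2

end TCAux















/-- Theorem 1: A rooted binary phylogenetic network `R` on `X` is tree-child
iff there exists a complete tree-child cherry-picking sequence for `R`. -/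
theorem rooted_treeChild_characterisation (R : DNet) (X : Finset ℕ)
    (hR : IsRootedBinaryNet R X) :
    R.TreeChild ↔
      ∃ (Ns : ℕ → DNet) (rs : ℕ → Pick) (k : ℕ),
        Ns 0 = R ∧ RCherrySeq Ns rs k ∧ (Ns k).SingleVertex ∧ TreeChildSeq rs k := by
  constructor
  · intro htc
    rcases TCAux.bin_cases hR with hsing | hbf
    · refine ⟨fun _ => R, fun _ => .cherry 0 0, 0, rfl, fun i h => absurd h (by omega), hsing,
        ?_, ?_⟩
      · intro i j _ hs
        exact absurd hs.2.1 (by omega)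
      · intro i i' j _ _ _ hs _
        exact absurd hs.2.1 (by omega)
    · obtain ⟨Ns, rs, k, h0, hseq, hsing, hG⟩ :=
        TCAux.forward_exists R.verts.card R X le_rfl hR htc
      exact ⟨Ns, rs, k, h0, hseq, hsing, TCAux.seq_tc hseq hG⟩
  · rintro ⟨Ns, rs, k, h0, hseq, hsing, htcs⟩
    have := TCAux.backward k Ns rs X (by rw [h0]; exact hR) hseq hsing htcs
    rwa [h0] at this
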